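/- arXiv:2103.10889 — 7 statements merged into one kernel-verified Lean document; each statement's English description precedes it below -/
import Mathlib

section
/- Let p be a prime. For every pair (x, α) ∈ ℝ × ℚ_p there exists a unique f ∈ ℤ[1/p] such that x − f ∈ [−1/2, 1/2) and α − f ∈ ℤ_p; that is, [−1/2, 1/2) × ℤ_p is a fundamental domain for the diagonally embedded ℤ[1/p] in ℝ × ℚ_p. -/
def InZInvP (p : ℕ) (q : ℚ) : Prop := ∃ (m : ℤ) (n : ℕ), q = (m : ℚ) / (p : ℚ) ^ n

/-!
Every `α ∈ ℚ_p` becomes a `p`-adic integer after subtracting a suitable `r = m / p^n`: truncate the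
`p`-adic integer `p^n α` modulo `p^n`. An element of `ℤ[1/p]` of `p`-adic norm at most `1` is an
integer, so the `f ∈ ℤ[1/p]` with `α - f ∈ ℤ_p` are exactly the translates `r + k`, `k ∈ ℤ`, and
among these exactly one satisfies `x - r - k ∈ [-1/2, 1/2)`.
-/

namespace InZInvP

variable {p : ℕ}

theorem intCast (m : ℤ) : InZInvP p m := ⟨m, 0, by simp⟩

theorem neg {q : ℚ} (hq : InZInvP p q) : InZInvP p (-q) := by
  obtain ⟨m, n, rfl⟩ := hq
  exact ⟨-m, n, by push_cast; ring⟩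

theorem add (hp : p ≠ 0) {a b : ℚ} (ha : InZInvP p a) (hb : InZInvP p b) :
    InZInvP p (a + b) := by
  obtain ⟨m₁, n₁, rfl⟩ := ha
  obtain ⟨m₂, n₂, rfl⟩ := hb
  refine ⟨m₁ * p ^ n₂ + m₂ * p ^ n₁, n₁ + n₂, ?_⟩
  field_simp
  push_cast
  ring

theorem sub (hp : p ≠ 0) {a b : ℚ} (ha : InZInvP p a) (hb : InZInvP p b) :
    InZInvP p (a - b) :=
  sub_eq_add_neg a b ▸ ha.add hp hb.neg

variable [Fact p.Prime]

theorem exists_eq_intCast_of_norm_le_one {q : ℚ} (hq : InZInvP p q) (hle : ‖(q : ℚ_[p])‖ ≤ 1) :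
    ∃ z : ℤ, q = z := by
  obtain ⟨m, n, rfl⟩ := hq
  have hp : p ≠ 0 := (Fact.out : p.Prime).ne_zero
  have hpn : (p : ℚ_[p]) ^ n ≠ 0 := pow_ne_zero _ (mod_cast hp)
  have hdvd : (p ^ n : ℤ) ∣ m := by
    rw [← Padic.norm_int_le_pow_iff_dvd, ← Padic.norm_p_pow]
    have hm : (m : ℚ_[p]) = (((m : ℚ) / (p : ℚ) ^ n : ℚ) : ℚ_[p]) * (p : ℚ_[p]) ^ n := by
      push_cast
      field_simp
    rw [hm, norm_mul]
    exact mul_le_of_le_one_left (norm_nonneg _) hle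
  obtain ⟨c, rfl⟩ := hdvd
  exact ⟨c, by push_cast; exact mul_div_cancel_left₀ _ (pow_ne_zero _ (mod_cast hp))⟩

theorem norm_sub_le_one_iff {α : ℚ_[p]} {r f : ℚ} (hr : InZInvP p r) (hαr : ‖α - r‖ ≤ 1)
    (hf : InZInvP p f) : ‖α - f‖ ≤ 1 ↔ ∃ z : ℤ, f = r + z := by
  constructor
  · intro hαf
    have hle : ‖((f - r : ℚ) : ℚ_[p])‖ ≤ 1 := by
      rw [Rat.cast_sub, ← sub_sub_sub_cancel_left _ _ α, sub_eq_add_neg]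
      exact (Padic.nonarchimedean _ _).trans (max_le hαr (by rwa [norm_neg]))
    obtain ⟨z, hz⟩ := (hf.sub (Fact.out : p.Prime).ne_zero hr).exists_eq_intCast_of_norm_le_one hle
    exact ⟨z, by rw [← hz]; ring⟩
  · rintro ⟨z, rfl⟩
    rw [Rat.cast_add, Rat.cast_intCast, ← sub_sub, sub_eq_add_neg]
    refine (Padic.nonarchimedean _ _).trans (max_le hαr ?_)
    rw [norm_neg]
    exact Padic.norm_int_le_one z

end InZInvP

theorem Padic.exists_inZInvP_norm_sub_le_one {p : ℕ} [Fact p.Prime] (α : ℚ_[p]) :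
    ∃ r : ℚ, InZInvP p r ∧ ‖α - r‖ ≤ 1 := by
  have hp : p.Prime := Fact.out
  obtain ⟨n, hn⟩ := pow_unbounded_of_one_lt ‖α‖ (mod_cast hp.one_lt : (1 : ℝ) < p)
  have hpn : (p : ℚ_[p]) ^ n ≠ 0 := pow_ne_zero _ (mod_cast hp.ne_zero)
  let β : ℤ_[p] := ⟨p ^ n * α, by
    rw [norm_mul, Padic.norm_p_pow, zpow_neg, zpow_natCast]
    exact inv_mul_le_one_of_le₀ hn.le (by positivity)⟩
  obtain ⟨c, hc⟩ := Ideal.mem_span_singleton'.mp (β.appr_spec n)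
  have hc' : (c : ℚ_[p]) * p ^ n = p ^ n * α - β.appr n := by
    simpa using congrArg ((↑) : ℤ_[p] → ℚ_[p]) hc
  refine ⟨(β.appr n : ℚ) / p ^ n, ⟨β.appr n, n, by push_cast; rfl⟩, ?_⟩
  have hαr : α - (((β.appr n : ℚ) / p ^ n : ℚ) : ℚ_[p]) = c := by
    push_cast
    field_simp
    linear_combination -hc'
  rw [hαr]
  exact c.norm_le_one

/-- **`[−1/2, 1/2) × ℤ_p` is a fundamental domain for the diagonal embedding of `ℤ[1/p]`
in `ℝ × ℚ_p`:** for every `(x, α) ∈ ℝ × ℚ_p` there is a unique `f ∈ ℤ[1/p]` with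
`x − f ∈ [−1/2, 1/2)` and `α − f ∈ ℤ_p`. -/
theorem fundamental_domain_ZinvP_in_R_times_Qp
    (p : ℕ) [Fact p.Prime] (x : ℝ) (α : ℚ_[p]) :
    ∃! f : ℚ, InZInvP p f ∧
      x - (f : ℝ) ∈ Set.Ico (-(1/2) : ℝ) (1/2) ∧
      ‖α - (f : ℚ_[p])‖ ≤ 1 := by
  obtain ⟨r, hr, hαr⟩ := Padic.exists_inZInvP_norm_sub_le_one α
  obtain ⟨k, hk, hk_unique⟩ := existsUnique_sub_zsmul_mem_Ico one_pos (x - r) (-(1/2) : ℝ)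
  have hIco (z : ℤ) : x - ((r + z : ℚ) : ℝ) ∈ Set.Ico (-(1/2) : ℝ) (1/2) ↔
      x - r - z • (1 : ℝ) ∈ Set.Ico (-(1/2) : ℝ) (-(1/2) + 1) := by
    norm_num [sub_sub]
  have hrk : InZInvP p (r + k) := hr.add (Fact.out : p.Prime).ne_zero (.intCast k)
  refine ⟨r + k, ⟨hrk, (hIco k).mpr hk, (hr.norm_sub_le_one_iff hαr hrk).mpr ⟨k, rfl⟩⟩, ?_⟩
  rintro f ⟨hf, hfx, hαf⟩
  obtain ⟨z, rfl⟩ := (hr.norm_sub_le_one_iff hαr hf).mp hαf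
  rw [hk_unique z ((hIco z).mp hfx)]
end

section
/- Let p be a prime and let D_∞ ⊆ SL₂(ℝ) be a fundamental domain for SL₂(ℤ), i.e. a set such that for every g ∈ SL₂(ℝ) there exists a unique γ ∈ SL₂(ℤ) with gγ ∈ D_∞. Then for every pair (g_∞, g_p) ∈ SL₂(ℝ) × SL₂(ℚ_p) there exists a unique γ ∈ SL₂(ℤ[1/p]) such that g_∞·γ ∈ D_∞ (viewing γ as a real matrix) and g_p·γ ∈ SL₂(ℤ_p) (viewing γ as a p-adic matrix); that is, D_∞ × SL₂(ℤ_p) is a fundamental domain for the diagonally embedded SL₂(ℤ[1/p]) in SL₂(ℝ) × SL₂(ℚ_p). -/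
/-- A matrix in `SL₂(ℚ)` has all its entries in `ℤ[1/p]`. -/
def SLEntriesInZInvP (p : ℕ) (γ : Matrix.SpecialLinearGroup (Fin 2) ℚ) : Prop :=
  ∀ i j, InZInvP p ((γ : Matrix (Fin 2) (Fin 2) ℚ) i j)

/-!
The key facts are `SL₂(ℚ_p) = SL₂(ℤ_p) · SL₂(ℤ[1/p])` and `SL₂(ℤ[1/p]) ∩ SL₂(ℤ_p) = SL₂(ℤ)`.
For the first, clear the lower-left entry of `g ∈ SL₂(ℚ_p)` by transvections in `SL₂(ℤ_p)` on
the left; the resulting `!![a, b; 0, a⁻¹]` becomes integral after multiplying on the right by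
`diag(p⁻ⁿ, pⁿ)` with `n = v_p(a)` and by a unipotent matrix with entry in `ℤ[1/p]`, which exists
because `ℚ_p = ℤ[1/p] + ℤ_p`. The second holds entrywise: `ℤ[1/p] ∩ ℤ_p = ℤ`.
Given these, a solution `γ` is obtained by first making the `p`-adic component integral and then
moving the real component into `D_∞` by the unique element of `SL₂(ℤ)`, and two solutions differ by
an element of `SL₂(ℤ[1/p]) ∩ SL₂(ℤ_p) = SL₂(ℤ)`, which must be trivial by uniqueness for `D_∞`.
-/

open Matrix.SpecialLinearGroup

open scoped MatrixGroups

theorem existsUnique_mul_mem_and_mul_mem {G H₁ H₂ Γ₀ : Type*} [Group G] [Group H₁] [Group H₂]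
    [Group Γ₀] {Γ : Subgroup G} {K : Subgroup H₂} {φ₁ : G →* H₁} {φ₂ : G →* H₂} {ι : Γ₀ →* G}
    (hι : ι.range = Γ ⊓ K.comap φ₂) (hK : ∀ h₂, ∃ γ ∈ Γ, h₂ * φ₂ γ ∈ K) {D : Set H₁}
    (hD : ∀ h₁, ∃! γ₀, h₁ * φ₁ (ι γ₀) ∈ D) (h₁ : H₁) (h₂ : H₂) :
    ∃! γ, γ ∈ Γ ∧ h₁ * φ₁ γ ∈ D ∧ h₂ * φ₂ γ ∈ K := by
  have hιΓ (γ₀ : Γ₀) : ι γ₀ ∈ Γ ⊓ K.comap φ₂ := hι ▸ ⟨γ₀, rfl⟩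
  obtain ⟨δ, hδΓ, hδK⟩ := hK h₂
  obtain ⟨γ₀, hγ₀, -⟩ := hD (h₁ * φ₁ δ)
  refine existsUnique_of_exists_of_unique ⟨δ * ι γ₀, mul_mem hδΓ (hιΓ γ₀).1,
    by simpa [mul_assoc] using hγ₀, by simpa [mul_assoc] using mul_mem hδK (hιΓ γ₀).2⟩ ?_
  rintro γ γ' ⟨hγΓ, hγD, hγK⟩ ⟨hγ'Γ, hγ'D, hγ'K⟩
  obtain ⟨β, hβ⟩ : γ⁻¹ * γ' ∈ ι.range := hι ▸ Subgroup.mem_inf.mpr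
    ⟨mul_mem (inv_mem hγΓ) hγ'Γ, by simpa [mul_assoc] using mul_mem (inv_mem hγK) hγ'K⟩
  have hβ1 : β = 1 :=
    (hD (h₁ * φ₁ γ)).unique (by simpa [hβ, mul_assoc] using hγ'D) (by simpa using hγD)
  rwa [hβ1, map_one, eq_comm, inv_mul_eq_one] at hβ

namespace Matrix.SpecialLinearGroup

variable {n R S T : Type*} [Fintype n] [DecidableEq n] [CommRing R] [CommRing S] [CommRing T]

theorem map_map (g : S →+* T) (f : R →+* S) (A : SpecialLinearGroup n R) :
    map g (map f A) = map (g.comp f) A :=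
  rfl

theorem mem_range_map_iff {f : R →+* S} (hf : Function.Injective f)
    {A : SpecialLinearGroup n S} : A ∈ (map f).range ↔ ∀ i j, A i j ∈ f.range := by
  refine ⟨fun ⟨B, hB⟩ i j => ⟨B i j, by rw [← hB]; rfl⟩, fun h => ?_⟩
  choose B hB using h
  have hdet : (Matrix.of B).det = 1 := hf <| by
    rw [RingHom.map_det, map_one, ← A.det_coe]
    congr
    ext i j
    exact hB i j
  exact ⟨⟨Matrix.of B, hdet⟩, ext _ _ hB⟩

theorem map_transvection (f : R →+* S) {i j : n} (hij : i ≠ j) (t : R) :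
    map f (transvection hij t) = transvection hij (f t) := by
  ext k l
  simp only [map_apply_coe, transvection_coe, RingHom.mapMatrix_apply, Matrix.map_apply,
    Matrix.add_apply, Matrix.one_apply, Matrix.single_apply]
  split_ifs <;> simp

theorem transvection_mul_apply_same {i j : n} (hij : i ≠ j) (t : R)
    (A : SpecialLinearGroup n R) (l : n) : (transvection hij t * A) i l = A i l + t * A j l :=
  Matrix.transvection_mul_apply_same _ _ _ _ _

theorem transvection_mul_apply_of_ne {i j : n} (hij : i ≠ j) (t : R)
    (A : SpecialLinearGroup n R) {k : n} (hk : k ≠ i) (l : n) :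
    (transvection hij t * A) k l = A k l :=
  Matrix.transvection_mul_apply_of_ne _ _ _ _ hk _ _

end Matrix.SpecialLinearGroup

section ZInvP

variable (p : ℕ) [NeZero p]

def zInvP : Subring ℚ where
  carrier := {q | InZInvP p q}
  zero_mem' := ⟨0, 0, by simp⟩
  one_mem' := ⟨1, 0, by simp⟩
  add_mem' := by
    rintro _ _ ⟨m₁, n₁, rfl⟩ ⟨m₂, n₂, rfl⟩
    refine ⟨m₁ * p ^ n₂ + m₂ * p ^ n₁, n₁ + n₂, ?_⟩
    have : (p : ℚ) ≠ 0 := NeZero.ne _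
    push_cast
    field_simp
    ring
  mul_mem' := by
    rintro _ _ ⟨m₁, n₁, rfl⟩ ⟨m₂, n₂, rfl⟩
    exact ⟨m₁ * m₂, n₁ + n₂, by push_cast; ring⟩
  neg_mem' := by
    rintro _ ⟨m, n, rfl⟩
    exact ⟨-m, n, by push_cast; ring⟩

def sl2ZInvP : Subgroup SL(2, ℚ) := (map (zInvP p).subtype).range

variable {p}

theorem mem_zInvP {q : ℚ} : q ∈ zInvP p ↔ InZInvP p q := Iff.rfl

theorem zpow_mem_zInvP (n : ℤ) : (p : ℚ) ^ n ∈ zInvP p := by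
  obtain ⟨k, rfl | rfl⟩ := n.eq_nat_or_neg
  · exact ⟨p ^ k, 0, by simp⟩
  · exact ⟨1, k, by simp⟩

theorem mem_sl2ZInvP_iff {γ : SL(2, ℚ)} : γ ∈ sl2ZInvP p ↔ SLEntriesInZInvP p γ := by
  rw [sl2ZInvP, mem_range_map_iff Subtype.val_injective, Subring.range_subtype]
  rfl

end ZInvP

section Padic

variable {p : ℕ} [Fact p.Prime]

theorem exists_mem_zInvP_norm_sub_le_one (x : ℚ_[p]) : ∃ q ∈ zInvP p, ‖x - q‖ ≤ 1 := by
  have hp : (1 : ℝ) < p := by exact_mod_cast (Fact.out : p.Prime).one_lt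
  obtain ⟨m, hm⟩ : ∃ m : ℕ, ‖x‖ ≤ (p : ℝ) ^ m :=
    (pow_unbounded_of_one_lt _ hp).imp fun _ => le_of_lt
  have hy : ‖(p : ℚ_[p]) ^ m * x‖ ≤ 1 := by
    rw [norm_mul, norm_pow, Padic.norm_p, inv_pow, inv_mul_le_one₀ (by positivity)]
    exact hm
  have hpm : (0 : ℝ) < (p : ℝ) ^ m := by positivity
  obtain ⟨z, hz⟩ := PadicInt.denseRange_intCast.exists_dist_lt (⟨_, hy⟩ : ℤ_[p]) (inv_pos.mpr hpm)
  replace hz : ‖(p : ℚ_[p]) ^ m * x - z‖ < ((p : ℝ) ^ m)⁻¹ := hz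
  refine ⟨z / p ^ m, ⟨z, m, rfl⟩, ?_⟩
  have hp0 : (p : ℚ_[p]) ≠ 0 := NeZero.ne _
  have hx : x - ((z / p ^ m : ℚ) : ℚ_[p]) = ((p : ℚ_[p]) ^ m)⁻¹ * ((p : ℚ_[p]) ^ m * x - z) := by
    push_cast
    field_simp
  rw [hx, norm_mul, norm_inv, norm_pow, Padic.norm_p, inv_pow, inv_inv]
  exact (mul_le_mul_of_nonneg_left hz.le hpm.le).trans_eq (mul_inv_cancel₀ hpm.ne')

theorem mem_range_intCast_iff_mem_zInvP {q : ℚ} :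
    q ∈ (Int.castRingHom ℚ).range ↔ q ∈ zInvP p ∧ ‖(q : ℚ_[p])‖ ≤ 1 := by
  refine ⟨?_, ?_⟩
  · rintro ⟨z, rfl⟩
    exact ⟨⟨z, 0, by simp⟩, by simpa using Padic.norm_int_le_one z⟩
  rintro ⟨⟨m, n, rfl⟩, hq⟩
  obtain ⟨z, rfl⟩ : (p : ℤ) ^ n ∣ m := by
    rw [← Padic.norm_int_le_pow_iff_dvd, ← Padic.norm_p_zpow, zpow_natCast]
    have hm : (m : ℚ_[p]) = ((m / p ^ n : ℚ) : ℚ_[p]) * (p : ℚ_[p]) ^ n := by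
      have : (p : ℚ_[p]) ≠ 0 := NeZero.ne _
      push_cast
      field_simp
    rw [hm, norm_mul]
    exact mul_le_of_le_one_left (norm_nonneg _) hq
  exact ⟨z, by simp [field]⟩

noncomputable def sl2Zp (p : ℕ) [Fact p.Prime] : Subgroup SL(2, ℚ_[p]) :=
  (map PadicInt.Coe.ringHom).range

theorem mem_sl2Zp_iff {g : SL(2, ℚ_[p])} :
    g ∈ sl2Zp p ↔ ∀ i j, ‖(g : Matrix (Fin 2) (Fin 2) ℚ_[p]) i j‖ ≤ 1 := by
  rw [sl2Zp, mem_range_map_iff Subtype.val_injective]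
  exact forall₂_congr fun i j => ⟨fun ⟨x, hx⟩ => hx ▸ x.2, fun h => ⟨⟨_, h⟩, rfl⟩⟩

theorem transvection_mem_sl2Zp {i j : Fin 2} (hij : i ≠ j) {t : ℚ_[p]} (ht : ‖t‖ ≤ 1) :
    transvection hij t ∈ sl2Zp p :=
  ⟨transvection hij ⟨t, ht⟩, map_transvection _ _ _⟩

theorem range_map_intCast_eq :
    (map (Int.castRingHom ℚ) : SL(2, ℤ) →* SL(2, ℚ)).range =
      sl2ZInvP p ⊓ (sl2Zp p).comap (map (Rat.castHom ℚ_[p])) := by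
  ext γ
  rw [Subgroup.mem_inf, Subgroup.mem_comap, mem_range_map_iff (Int.castRingHom ℚ).injective_int,
    mem_sl2ZInvP_iff, mem_sl2Zp_iff, SLEntriesInZInvP]
  simp only [← forall_and]
  exact forall₂_congr fun i j => mem_range_intCast_iff_mem_zInvP

theorem exists_mem_sl2Zp_mul_apply_one_zero_eq_zero (g : SL(2, ℚ_[p])) :
    ∃ k ∈ sl2Zp p, (k * g) 1 0 = 0 := by
  wlog hg : ‖g 1 0‖ ≤ ‖g 0 0‖ generalizing g
  · let u : SL(2, ℚ_[p]) := transvection zero_ne_one 1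
    have hug : ‖(u * g) 1 0‖ ≤ ‖(u * g) 0 0‖ := by
      rw [transvection_mul_apply_of_ne _ _ _ one_ne_zero, transvection_mul_apply_same, one_mul,
        Padic.add_eq_max_of_ne (by linarith)]
      exact le_max_right _ _
    obtain ⟨k, hk, hkg⟩ := this _ hug
    exact ⟨k * u, mul_mem hk (transvection_mem_sl2Zp _ (by simp)), by rwa [mul_assoc]⟩
  have ha : g 0 0 ≠ 0 := by
    intro ha
    have hc : g 1 0 = 0 := norm_le_zero_iff.mp (by simpa [ha] using hg)
    have hdet := g.det_coe
    rw [Matrix.det_fin_two, ha, hc] at hdet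
    simp at hdet
  refine ⟨transvection one_ne_zero (-(g 1 0 / g 0 0)), transvection_mem_sl2Zp _ ?_, ?_⟩
  · rwa [norm_neg, norm_div, div_le_one (norm_pos_iff.mpr ha)]
  · rw [transvection_mul_apply_same]
    field_simp
    ring

theorem exists_mul_mem_sl2Zp_of_apply_one_zero_eq_zero {g : SL(2, ℚ_[p])} (hg : g 1 0 = 0) :
    ∃ γ ∈ sl2ZInvP p, g * map (Rat.castHom ℚ_[p]) γ ∈ sl2Zp p := by
  have hdet : g 0 0 * g 1 1 = 1 := by
    have := g.det_coe
    rwa [Matrix.det_fin_two, hg, mul_zero, sub_zero] at this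
  have ha : g 0 0 ≠ 0 := left_ne_zero_of_mul_eq_one hdet
  have hd : g 1 1 = (g 0 0)⁻¹ := eq_inv_of_mul_eq_one_right hdet
  set n := (g 0 0).valuation
  set u := g 0 0 * (p : ℚ_[p]) ^ (-n)
  have hp : (0 : ℝ) < p := by exact_mod_cast (Fact.out : p.Prime).pos
  have hu : ‖u‖ = 1 := by
    rw [norm_mul, Padic.norm_eq_zpow_neg_valuation ha, Padic.norm_p_zpow, ← zpow_add₀ hp.ne']
    simp [n]
  obtain ⟨q, hq, hbq⟩ := exists_mem_zInvP_norm_sub_le_one (g 0 1 * (p : ℚ_[p]) ^ n / u)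
  have hpn : (p : ℚ) ^ (-n) ≠ 0 := zpow_ne_zero _ (NeZero.ne _)
  refine ⟨diag2 _ hpn * transvection zero_ne_one (-q),
    mul_mem ?_ ⟨transvection _ ⟨-q, neg_mem hq⟩, map_transvection _ _ _⟩, ?_⟩
  · rw [mem_sl2ZInvP_iff]
    simpa [SLEntriesInZInvP, diag2_coe', Fin.forall_fin_two, ← mem_zInvP, zpow_mem_zInvP]
      using zpow_mem_zInvP (p := p) (-n)
  · have hprod : ((g * map (Rat.castHom ℚ_[p]) (diag2 _ hpn * transvection zero_ne_one (-q)) :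
        SL(2, ℚ_[p])) : Matrix (Fin 2) (Fin 2) ℚ_[p]) =
        !![u, u * (g 0 1 * (p : ℚ_[p]) ^ n / u - q); 0, u⁻¹] := by
      ext i j
      fin_cases i <;> fin_cases j <;>
        simp [u, coe_mul, diag2_coe', transvection_coe, Matrix.mul_apply, hg, hd]
      all_goals field_simp
      ring
    rw [mem_sl2Zp_iff, hprod]
    simp [Fin.forall_fin_two, hu, hbq]

theorem exists_mul_mem_sl2Zp (g : SL(2, ℚ_[p])) :
    ∃ γ ∈ sl2ZInvP p, g * map (Rat.castHom ℚ_[p]) γ ∈ sl2Zp p := by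
  obtain ⟨k, hk, hkg⟩ := exists_mem_sl2Zp_mul_apply_one_zero_eq_zero g
  obtain ⟨γ, hγ, hkgγ⟩ := exists_mul_mem_sl2Zp_of_apply_one_zero_eq_zero hkg
  refine ⟨γ, hγ, ?_⟩
  simpa [mul_assoc] using mul_mem (inv_mem hk) hkgγ

end Padic

/-- **`D_∞ × SL₂(ℤ_p)` is a fundamental domain for the diagonally embedded
`SL₂(ℤ[1/p])` in `SL₂(ℝ) × SL₂(ℚ_p)`:** if `D_∞ ⊆ SL₂(ℝ)` is a fundamental domain for
`SL₂(ℤ)` (that is, for every `g ∈ SL₂(ℝ)` there is a unique `γ₀ ∈ SL₂(ℤ)` with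
`g·γ₀ ∈ D_∞`), then for every `(g_∞, g_p) ∈ SL₂(ℝ) × SL₂(ℚ_p)` there is a unique
`γ ∈ SL₂(ℤ[1/p])` with `g_∞·γ ∈ D_∞` and `g_p·γ ∈ SL₂(ℤ_p)`. -/
theorem fundamental_domain_SL2ZinvP_in_SL2R_times_SL2Qp
    (p : ℕ) [Fact p.Prime]
    (D : Set (Matrix.SpecialLinearGroup (Fin 2) ℝ))
    (hD : ∀ g : Matrix.SpecialLinearGroup (Fin 2) ℝ,
      ∃! γ₀ : Matrix.SpecialLinearGroup (Fin 2) ℤ,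
        g * Matrix.SpecialLinearGroup.map (Int.castRingHom ℝ) γ₀ ∈ D)
    (ginf : Matrix.SpecialLinearGroup (Fin 2) ℝ)
    (gp : Matrix.SpecialLinearGroup (Fin 2) ℚ_[p]) :
    ∃! γ : Matrix.SpecialLinearGroup (Fin 2) ℚ,
      SLEntriesInZInvP p γ ∧
      ginf * Matrix.SpecialLinearGroup.map (Rat.castHom ℝ) γ ∈ D ∧
      (∀ i j, ‖((gp * Matrix.SpecialLinearGroup.map (Rat.castHom ℚ_[p]) γ :
          Matrix.SpecialLinearGroup (Fin 2) ℚ_[p]) : Matrix (Fin 2) (Fin 2) ℚ_[p]) i j‖ ≤ 1) := by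
  have hD' (g : SL(2, ℝ)) :
      ∃! γ₀ : SL(2, ℤ), g * map (Rat.castHom ℝ) (map (Int.castRingHom ℚ) γ₀) ∈ D := by
    simpa only [map_map, RingHom.ext_int ((Rat.castHom ℝ).comp _) (Int.castRingHom ℝ)] using hD g
  simpa only [mem_sl2ZInvP_iff, mem_sl2Zp_iff] using
    existsUnique_mul_mem_and_mul_mem range_map_intCast_eq exists_mul_mem_sl2Zp hD' ginf gp
end

section
/- Let p be a prime. Every g ∈ SL₂(ℚ_p) can be written as g = k·γ where k ∈ SL₂(ℤ_p) and γ is (the image in SL₂(ℚ_p) of) a matrix in SL₂(ℤ[1/p]); equivalently, SL₂(ℚ_p) = SL₂(ℤ_p) · SL₂(ℤ[1/p]). -/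
/-!
After multiplying `g = [[a, b], [c, d]]` on the left by `1` or by the Weyl element of
`SL₂(ℤ_p)`, we may assume `‖c‖ ≤ ‖a‖`. Put `P = p ^ v(a)`, so `‖P‖ = ‖a‖`, and use the density
of `ℤ[1/p]` in `ℚ_p` to pick `r ∈ ℤ[1/p]` with `‖bP/a - r‖ < ‖a‖⁻¹`. For
`γ = [[P, r], [0, P⁻¹]] ∈ SL₂(ℤ[1/p])` we get `g γ⁻¹ = [[a/P, bP - ar], [c/P, dP - cr]]`, whose
top-left entry is a unit and whose off-diagonal entries are integral; since the determinant
is `1` and the norm is ultrametric, the last entry is integral too, so `g γ⁻¹ ∈ SL₂(ℤ_p)`.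
-/

open scoped MatrixGroups

lemma inZInvP_zero (p : ℕ) : InZInvP p 0 := ⟨0, 0, by simp⟩

lemma inZInvP_zpow (p : ℕ) (v : ℤ) : InZInvP p ((p : ℚ) ^ v) := by
  obtain ⟨n, rfl | rfl⟩ := v.eq_nat_or_neg
  · exact ⟨(p : ℤ) ^ n, 0, by simp⟩
  · exact ⟨1, n, by simp⟩

lemma exists_inZInvP_norm_sub_lt (p : ℕ) [Fact p.Prime] (x : ℚ_[p]) {ε : ℝ} (hε : 0 < ε) :
    ∃ r : ℚ, InZInvP p r ∧ ‖x - r‖ < ε := by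
  have hp : (1 : ℝ) < p := by exact_mod_cast (Fact.out : p.Prime).one_lt
  obtain ⟨n, hn⟩ := pow_unbounded_of_one_lt ‖x‖ hp
  have hpn : (0 : ℝ) < (p : ℝ) ^ n := by positivity
  have hz : ‖x * (p : ℚ_[p]) ^ n‖ ≤ 1 := by
    simpa [div_le_one hpn, ← div_eq_mul_inv] using hn.le
  obtain ⟨m, hm⟩ := PadicInt.denseRange_intCast.exists_dist_lt (⟨_, hz⟩ : ℤ_[p])
    (div_pos hε hpn)
  refine ⟨m / (p : ℚ) ^ n, ⟨m, n, rfl⟩, ?_⟩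
  have hp0 : (p : ℚ_[p]) ≠ 0 := by exact_mod_cast (Fact.out : p.Prime).ne_zero
  have hx : x - ((m / (p : ℚ) ^ n : ℚ) : ℚ_[p]) = (x * (p : ℚ_[p]) ^ n - m) / (p : ℚ_[p]) ^ n := by
    push_cast
    field_simp
  rw [hx, norm_div, norm_pow, Padic.norm_p, inv_pow, div_inv_eq_mul, ← lt_div_iff₀ hpn]
  exact hm

namespace Matrix.SpecialLinearGroup

lemma exists_map_padicIntCoe_eq {n : Type*} [Fintype n] [DecidableEq n] {p : ℕ} [Fact p.Prime]
    (K : SpecialLinearGroup n ℚ_[p]) (hK : ∀ i j, ‖K i j‖ ≤ 1) :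
    ∃ k : SpecialLinearGroup n ℤ_[p], map PadicInt.Coe.ringHom k = K := by
  let M : Matrix n n ℤ_[p] := Matrix.of fun i j => ⟨K i j, hK i j⟩
  have hM : PadicInt.Coe.ringHom.mapMatrix M = K := rfl
  have hdet : M.det = 1 := Subtype.coe_injective <|
    (RingHom.map_det PadicInt.Coe.ringHom M).trans (by rw [hM, K.det_coe]; rfl)
  exact ⟨⟨M, hdet⟩, ext _ _ fun _ _ => rfl⟩

lemma norm_apply_one_one_le_one {K : Type*} [NormedField K] [IsUltrametricDist K]
    (A : SL(2, K)) (h00 : ‖A 0 0‖ = 1) (h01 : ‖A 0 1‖ ≤ 1) (h10 : ‖A 1 0‖ ≤ 1) :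
    ‖A 1 1‖ ≤ 1 := by
  have hdet : A 0 0 * A 1 1 = 1 + A 0 1 * A 1 0 := by
    linear_combination (det_fin_two (A : Matrix (Fin 2) (Fin 2) K)).symm.trans A.det_coe
  calc ‖A 1 1‖ = ‖1 + A 0 1 * A 1 0‖ := by rw [← hdet, norm_mul, h00, one_mul]
    _ ≤ max ‖(1 : K)‖ ‖A 0 1 * A 1 0‖ := IsUltrametricDist.norm_add_le_max _ _
    _ ≤ 1 := max_le norm_one.le (by rw [norm_mul]; exact mul_le_one₀ h01 (norm_nonneg _) h10)

lemma exists_norm_map_mul_apply_one_zero_le {R K : Type*} [CommRing R] [NormedCommRing K]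
    (f : R →+* K) (g : SL(2, K)) :
    ∃ w : SL(2, R), ‖(map f w * g) 1 0‖ ≤ ‖(map f w * g) 0 0‖ := by
  by_cases hg : ‖g 1 0‖ ≤ ‖g 0 0‖
  · exact ⟨1, by simpa using hg⟩
  · refine ⟨map (Int.castRingHom R) ModularGroup.S, ?_⟩
    simpa [ModularGroup.coe_S, mul_apply, Fin.sum_univ_two] using (not_le.1 hg).le

end Matrix.SpecialLinearGroup

open Matrix.SpecialLinearGroup in
lemma exists_inZInvP_norm_mul_inv_apply_le_one (p : ℕ) [Fact p.Prime] (g : SL(2, ℚ_[p]))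
    (hg : ‖g 1 0‖ ≤ ‖g 0 0‖) :
    ∃ γ : SL(2, ℚ), SLEntriesInZInvP p γ ∧
      ∀ i j, ‖(g * (map (Rat.castHom ℚ_[p]) γ)⁻¹) i j‖ ≤ 1 := by
  have ha : g 0 0 ≠ 0 := by
    intro ha
    have hc : g 1 0 = 0 := by rwa [ha, norm_zero, norm_le_zero_iff] at hg
    simpa [ha, hc] using
      (Matrix.det_fin_two (g : Matrix (Fin 2) (Fin 2) ℚ_[p])).symm.trans g.det_coe
  have ha' : ‖g 0 0‖ ≠ 0 := norm_ne_zero_iff.2 ha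
  set v := (g 0 0).valuation
  have hP : ‖(p : ℚ_[p]) ^ v‖ = ‖g 0 0‖ := by
    rw [Padic.norm_p_zpow, Padic.norm_eq_zpow_neg_valuation ha]
  obtain ⟨r, hr, hbr⟩ := exists_inZInvP_norm_sub_lt p (g 0 1 * (p : ℚ_[p]) ^ v / g 0 0)
    (inv_pos.2 (norm_pos_iff.2 ha))
  have hp : (p : ℚ) ≠ 0 := by exact_mod_cast (Fact.out : p.Prime).ne_zero
  let γ : SL(2, ℚ) := ⟨!![(p : ℚ) ^ v, r; 0, (p : ℚ) ^ (-v)], by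
    simp [Matrix.det_fin_two_of, zpow_neg, mul_inv_cancel₀ (zpow_ne_zero v hp)]⟩
  refine ⟨γ, ?_, ?_⟩
  · simp only [SLEntriesInZInvP, Fin.forall_fin_two]
    exact ⟨⟨inZInvP_zpow p v, hr⟩, inZInvP_zero p, inZInvP_zpow p (-v)⟩
  set K := g * (map (Rat.castHom ℚ_[p]) γ)⁻¹
  have hK : (K : Matrix (Fin 2) (Fin 2) ℚ_[p]) =
      !![g 0 0 / (p : ℚ_[p]) ^ v, g 0 1 * (p : ℚ_[p]) ^ v - g 0 0 * r;
        g 1 0 / (p : ℚ_[p]) ^ v, g 1 1 * (p : ℚ_[p]) ^ v - g 1 0 * r] := by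
    ext i j
    rw [coe_mul, coe_inv, map_apply_coe]
    simp only [RingHom.mapMatrix_apply, γ, Matrix.adjugate_fin_two]
    fin_cases i <;> fin_cases j <;> simp [Matrix.mul_apply, Fin.sum_univ_two] <;> ring
  have hK00 : K 0 0 = g 0 0 / (p : ℚ_[p]) ^ v := by rw [hK]; rfl
  have hK01 : K 0 1 = g 0 1 * (p : ℚ_[p]) ^ v - g 0 0 * r := by rw [hK]; rfl
  have hK10 : K 1 0 = g 1 0 / (p : ℚ_[p]) ^ v := by rw [hK]; rfl
  have h00 : ‖K 0 0‖ = 1 := by rw [hK00, norm_div, hP, div_self ha']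
  have h01 : ‖K 0 1‖ ≤ 1 :=
    calc ‖K 0 1‖ = ‖g 0 0‖ * ‖g 0 1 * (p : ℚ_[p]) ^ v / g 0 0 - r‖ := by
          rw [hK01, ← norm_mul, mul_sub, mul_div_cancel₀ _ ha]
      _ ≤ ‖g 0 0‖ * ‖g 0 0‖⁻¹ := by gcongr
      _ = 1 := mul_inv_cancel₀ ha'
  have h10 : ‖K 1 0‖ ≤ 1 := by rwa [hK10, norm_div, hP, div_le_one (norm_pos_iff.2 ha)]
  intro i j
  fin_cases i <;> fin_cases j
  exacts [h00.le, h01, h10, norm_apply_one_one_le_one K h00 h01 h10]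

/-- **`SL₂(ℚ_p) = SL₂(ℤ_p) · SL₂(ℤ[1/p])`:** every `g ∈ SL₂(ℚ_p)` can be written as
`g = k·γ` with `k ∈ SL₂(ℤ_p)` and `γ` the image in `SL₂(ℚ_p)` of a matrix in
`SL₂(ℤ[1/p])`. -/
theorem SL2Qp_eq_SL2Zp_mul_SL2ZinvP
    (p : ℕ) [Fact p.Prime] (g : Matrix.SpecialLinearGroup (Fin 2) ℚ_[p]) :
    ∃ (k : Matrix.SpecialLinearGroup (Fin 2) ℤ_[p])
      (γ : Matrix.SpecialLinearGroup (Fin 2) ℚ),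
      SLEntriesInZInvP p γ ∧
      g = Matrix.SpecialLinearGroup.map (PadicInt.Coe.ringHom) k *
            Matrix.SpecialLinearGroup.map (Rat.castHom ℚ_[p]) γ := by
  obtain ⟨w, hw⟩ := Matrix.SpecialLinearGroup.exists_norm_map_mul_apply_one_zero_le
    PadicInt.Coe.ringHom g
  obtain ⟨γ, hγ, hK⟩ := exists_inZInvP_norm_mul_inv_apply_le_one p _ hw
  obtain ⟨k, hk⟩ := Matrix.SpecialLinearGroup.exists_map_padicIntCoe_eq _ hK
  refine ⟨w⁻¹ * k, γ, hγ, ?_⟩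
  rw [map_mul, map_inv, hk]
  group
end

section
/- Let p be a prime. A vector v ∈ ℤ[1/p]² is primitive over ℤ[1/p] (i.e. there exist x, y ∈ ℤ[1/p] with v₁·x + v₂·y = 1) if and only if there exist an integer α ∈ ℤ and a primitive integer vector w ∈ ℤ²_prim such that v = p^α · w. -/
/-- A vector `v ∈ ℤ[1/p]²` is primitive over `ℤ[1/p]`: the gcd equation
`v₁·x + v₂·y = 1` has a solution with `x, y ∈ ℤ[1/p]`. -/
def IsPrimitiveZInvP (p : ℕ) (v : ℚ × ℚ) : Prop :=
  ∃ x y : ℚ, InZInvP p x ∧ InZInvP p y ∧ v.1 * x + v.2 * y = 1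

/-!
Write `v = (a, b) / p^n` with `a, b ∈ ℤ`. Clearing denominators in a solution of
`v₁ x + v₂ y = 1` over `ℤ[1/p]` writes a power of `p` as an integer combination of `a` and `b`,
so `gcd(a, b)` divides a power of the prime `p` and is therefore itself a power `p^k`;
then `v = p^(k - n) · (a, b) / gcd(a, b)`. Conversely, a Bézout relation for `w` scaled by
`p^(-α)` solves the gcd equation for `p^α · w`.
-/

section

variable {p : ℕ}

theorem InZInvP.zpow_mul_intCast (α m : ℤ) : InZInvP p ((p : ℚ) ^ α * m) := by
  cases α with
  | ofNat n => exact ⟨m * p ^ n, 0, by rw [Int.ofNat_eq_natCast, zpow_natCast]; push_cast; ring⟩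
  | negSucc n => exact ⟨m, n + 1, by rw [zpow_negSucc]; field_simp⟩

theorem InZInvP.exists_common_denom (hp : p ≠ 0) {q r : ℚ} (hq : InZInvP p q) (hr : InZInvP p r) :
    ∃ (a b : ℤ) (n : ℕ), q = a / (p : ℚ) ^ n ∧ r = b / (p : ℚ) ^ n := by
  obtain ⟨a, k, rfl⟩ := hq
  obtain ⟨b, l, rfl⟩ := hr
  have hp' : (p : ℚ) ≠ 0 := by exact_mod_cast hp
  refine ⟨a * p ^ l, b * p ^ k, k + l, ?_, ?_⟩ <;> · push_cast; field_simp; ring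

theorem exists_pow_eq_mul_add_mul_of_inZInvP (hp : p ≠ 0) {a b : ℤ} {n : ℕ} {x y : ℚ}
    (hx : InZInvP p x) (hy : InZInvP p y) (h : a * x + b * y = (p : ℚ) ^ n) :
    ∃ (N : ℕ) (c d : ℤ), ((p ^ N : ℕ) : ℤ) = a * c + b * d := by
  obtain ⟨c, d, s, rfl, rfl⟩ := hx.exists_common_denom hp hy
  refine ⟨n + s, c, d, ?_⟩
  have hp' : (p : ℚ) ≠ 0 := by exact_mod_cast hp
  field_simp at h
  qify
  rw [pow_add]
  linear_combination h.symm

theorem gcd_eq_pow_of_mul_add_mul_eq_pow (hp : p.Prime) {a b : ℤ} {n : ℕ} {x y : ℚ}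
    (hx : InZInvP p x) (hy : InZInvP p y) (h : a * x + b * y = (p : ℚ) ^ n) :
    ∃ k : ℕ, Int.gcd a b = p ^ k := by
  obtain ⟨N, c, d, hN⟩ := exists_pow_eq_mul_add_mul_of_inZInvP hp.ne_zero hx hy h
  obtain ⟨k, -, hk⟩ := (Nat.dvd_prime_pow hp).mp (Int.gcd_dvd_iff.mpr ⟨c, d, hN⟩)
  exact ⟨k, hk⟩

theorem IsPrimitiveZInvP.exists_zpow_mul_coprime (hp : p.Prime) {v : ℚ × ℚ}
    (hv : InZInvP p v.1 ∧ InZInvP p v.2) (h : IsPrimitiveZInvP p v) :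
    ∃ (α : ℤ) (w : ℤ × ℤ), IsCoprime w.1 w.2 ∧
      v.1 = (p : ℚ) ^ α * (w.1 : ℚ) ∧ v.2 = (p : ℚ) ^ α * (w.2 : ℚ) := by
  obtain ⟨x, y, hx, hy, hxy⟩ := h
  obtain ⟨a, b, n, h1, h2⟩ := hv.1.exists_common_denom hp.ne_zero hv.2
  have hp' : (p : ℚ) ≠ 0 := by exact_mod_cast hp.ne_zero
  obtain ⟨k, hk⟩ := gcd_eq_pow_of_mul_add_mul_eq_pow hp hx hy (n := n) <| by
    rw [h1, h2] at hxy
    field_simp at hxy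
    exact hxy
  obtain ⟨a', b', hab, ha, hb⟩ := Int.exists_gcd_one (hk ▸ pow_pos hp.pos k)
  rw [hk] at ha hb
  refine ⟨k - n, (a', b'), Int.isCoprime_iff_gcd_eq_one.mpr hab, ?_, ?_⟩ <;>
  · simp only [h1, h2, ha, hb, zpow_sub₀ hp', zpow_natCast]
    push_cast
    field_simp

theorem isPrimitiveZInvP_zpow_mul (hp : p ≠ 0) (α : ℤ) {w : ℤ × ℤ} (hw : IsCoprime w.1 w.2) :
    IsPrimitiveZInvP p ((p : ℚ) ^ α * w.1, (p : ℚ) ^ α * w.2) := by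
  obtain ⟨x, y, hxy⟩ := hw
  refine ⟨(p : ℚ) ^ (-α) * x, (p : ℚ) ^ (-α) * y, InZInvP.zpow_mul_intCast _ _,
    InZInvP.zpow_mul_intCast _ _, ?_⟩
  have hpα : (p : ℚ) ^ α * (p : ℚ) ^ (-α) = 1 := by
    rw [zpow_neg, mul_inv_cancel₀ (zpow_ne_zero α (by exact_mod_cast hp))]
  have hxyℚ : (x : ℚ) * w.1 + (y : ℚ) * w.2 = 1 := by exact_mod_cast hxy
  linear_combination (p : ℚ) ^ α * (p : ℚ) ^ (-α) * hxyℚ + hpα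

end

/-- **Primitive vectors of `ℤ[1/p]²` are exactly the `p`-power multiples of primitive
integer vectors:** a vector `v ∈ ℤ[1/p]²` is primitive over `ℤ[1/p]` iff `v = p^α · w`
for some `α ∈ ℤ` and some `w ∈ ℤ²` with coprime coordinates. -/
theorem primitive_ZinvP_iff_ppow_mul_primitive_int
    (p : ℕ) (hp : p.Prime) (v : ℚ × ℚ) (hv : InZInvP p v.1 ∧ InZInvP p v.2) :
    IsPrimitiveZInvP p v ↔
      ∃ (α : ℤ) (w : ℤ × ℤ), IsCoprime w.1 w.2 ∧
        v.1 = (p : ℚ) ^ α * (w.1 : ℚ) ∧ v.2 = (p : ℚ) ^ α * (w.2 : ℚ) := by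
  refine ⟨IsPrimitiveZInvP.exists_zpow_mul_coprime hp hv, ?_⟩
  rintro ⟨α, w, hw, h1, h2⟩
  rw [← Prod.mk.eta (p := v), h1, h2]
  exact isPrimitiveZInvP_zpow_mul hp.ne_zero α hw
end

section
/- Let p be a prime. Let q ∈ Q_p (lower triangular in SL₂(ℤ_p)), t ∈ ℤ, a = diag(p^{−t}, p^{t}), and n = [[1, x],[0, 1]] with x ∈ ℚ_p. Set c = max(1, p^{−2t})² · ‖Ad n‖, where ‖Ad n‖ is the operator norm of T ↦ n T n⁻¹ on Mat₂(ℚ_p) (a power of p). Then for every integer N ≥ 1 with c·p^{−N} < 1: O_{p^{−N}} · q a n · O_{p^{−N}} ⊆ q · O_{c·p^{−N}}^{Q_p} · a · O_{c·p^{−N}}^{N_p} · n. Moreover, c is bounded when x ranges over a bounded subset of ℚ_p and t is bounded from below. -/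
open Pointwise

variable (p : ℕ) [Fact p.Prime]

/-- The operator norm of a `2×2` matrix over `ℚ_p`, acting on `ℚ_p²` equipped with the
sup norm `‖v‖_p = max(|v 0|_p, |v 1|_p)`. -/
noncomputable def matOpNorm (T : Matrix (Fin 2) (Fin 2) ℚ_[p]) : ℝ :=
  sSup {r : ℝ | ∃ v : Fin 2 → ℚ_[p], ‖v‖ = 1 ∧ r = ‖T.mulVec v‖}

/-- The operator norm `‖Ad n‖` of the conjugation `T ↦ n T n⁻¹` by the upper unipotent
matrix `n = [[1,x],[0,1]]`, acting on `Mat₂(ℚ_p)` with its operator norm. -/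
noncomputable def adNorm (x : ℚ_[p]) : ℝ :=
  sSup {r : ℝ | ∃ T : Matrix (Fin 2) (Fin 2) ℚ_[p], matOpNorm p T = 1 ∧
    r = matOpNorm p (!![1, x; 0, 1] * T * !![1, -x; 0, 1])}

/-- The constant `c = max(1, p^{−2t})² · ‖Ad n‖` of the effective Bruhat–Iwasawa
decomposition. -/
noncomputable def cConst (t : ℤ) (x : ℚ_[p]) : ℝ :=
  (max 1 ((p : ℝ) ^ (-(2 * t))))^2 * adNorm p x

/-- The neighborhood `O_ε = {g ∈ SL₂(ℚ_p) : all entries of g − I have norm ≤ ε}`. -/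
def congNbhdR (ε : ℝ) : Set (Matrix.SpecialLinearGroup (Fin 2) ℚ_[p]) :=
  {g | ∀ i j, ‖(g : Matrix (Fin 2) (Fin 2) ℚ_[p]) i j -
      (1 : Matrix (Fin 2) (Fin 2) ℚ_[p]) i j‖ ≤ ε}

/-- `Q_p`: the lower triangular matrices in `SL₂(ℤ_p)`, inside `SL₂(ℚ_p)`. -/
def lowerTriZp : Set (Matrix.SpecialLinearGroup (Fin 2) ℚ_[p]) :=
  {g | (g : Matrix (Fin 2) (Fin 2) ℚ_[p]) 0 1 = 0 ∧
    ∀ i j, ‖(g : Matrix (Fin 2) (Fin 2) ℚ_[p]) i j‖ ≤ 1}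

/-- `N_p`: the upper unipotent matrices in `SL₂(ℚ_p)`. -/
def upperUnip : Set (Matrix.SpecialLinearGroup (Fin 2) ℚ_[p]) :=
  {g | (g : Matrix (Fin 2) (Fin 2) ℚ_[p]) 0 0 = 1 ∧
    (g : Matrix (Fin 2) (Fin 2) ℚ_[p]) 1 1 = 1 ∧
    (g : Matrix (Fin 2) (Fin 2) ℚ_[p]) 1 0 = 0}

/-- The diagonal element `a = diag(p^{−t}, p^{t}) ∈ SL₂(ℚ_p)`. -/
noncomputable def aMat (t : ℤ) : Matrix.SpecialLinearGroup (Fin 2) ℚ_[p] :=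
  ⟨!![(p : ℚ_[p]) ^ (-t), 0; 0, (p : ℚ_[p]) ^ t], by
    have hp : (p : ℚ_[p]) ≠ 0 :=
      Nat.cast_ne_zero.mpr (Fact.out : p.Prime).ne_zero
    simp only [Matrix.det_fin_two_of, mul_zero, sub_zero, zero_mul, ← zpow_add₀ hp,
      neg_add_cancel, zpow_zero]⟩

/-- The upper unipotent element `n = [[1,x],[0,1]] ∈ SL₂(ℚ_p)`. -/
noncomputable def nMat (x : ℚ_[p]) : Matrix.SpecialLinearGroup (Fin 2) ℚ_[p] :=
  ⟨!![1, x; 0, 1], by simp [Matrix.det_fin_two_of]⟩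

/-!
Write `g₁ · qan · g₂ = q · h₁ a h₂ · n` with `h₁ = q⁻¹ g₁ q` and `h₂ = n g₂ n⁻¹`. Since `q` and
`q⁻¹` are integral, `h₁` stays in `O_ε`; conjugation by `n` costs the factor
`‖Ad n‖ = max(1, |x|_p)²`. Factor `h₁ a h₂ = q' a n'` with `q'` lower triangular and `n'` upper
unipotent (LU decomposition with the diagonal `a` split off). Dividing the entries of `h₁ a h₂`
by `p^{-t}`, the only possibly large coefficient `p^{2t}` always multiplies an off-diagonal entry
of `h₁` or `h₂`, so the entries of `q' - 1` and `n' - 1` are bounded by `max(1, p^{-2t})` times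
the size of `h₁ - 1`, `h₂ - 1`. The explicit formula for `‖Ad n‖` also gives the bound on `c`.
-/

open scoped MatrixGroups

section Ultrametric

variable {R : Type*}

lemma IsUltrametricDist.norm_add_le_of_le {S : Type*} [SeminormedAddGroup S]
    [IsUltrametricDist S] {a b : S} {r : ℝ} (ha : ‖a‖ ≤ r) (hb : ‖b‖ ≤ r) : ‖a + b‖ ≤ r :=
  (norm_add_le_max a b).trans (max_le ha hb)

lemma norm_eq_one_of_norm_sub_one_lt_one [NormedRing R] [NormOneClass R] [IsUltrametricDist R]
    {a : R} (h : ‖a - 1‖ < 1) : ‖a‖ = 1 := by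
  have h' : ‖a + -1‖ < max ‖a‖ ‖(-1 : R)‖ := by
    rw [← sub_eq_add_neg, norm_neg, norm_one]
    exact lt_max_of_lt_right h
  simpa using IsUltrametricDist.norm_eq_of_add_norm_lt_max h'

lemma norm_inv_sub_one_eq {𝕜 : Type*} [NormedField 𝕜] {a : 𝕜} (ha : ‖a‖ = 1) :
    ‖a⁻¹ - 1‖ = ‖a - 1‖ := by
  have ha0 : a ≠ 0 := norm_ne_zero_iff.mp (by rw [ha]; exact one_ne_zero)
  rw [show a⁻¹ - 1 = -(a - 1) * a⁻¹ by field_simp; ring, norm_mul, norm_neg, norm_inv, ha,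
    inv_one, mul_one]

lemma Matrix.norm_apply_le_one_of_norm_sub_one_apply_le [NormedRing R] [NormOneClass R]
    [IsUltrametricDist R] {n : Type*} [DecidableEq n] {A : Matrix n n R} {δ : ℝ}
    (hA : ∀ i j, ‖(A - 1) i j‖ ≤ δ) (hδ : δ ≤ 1) (i j : n) : ‖A i j‖ ≤ 1 := by
  have h1 : ‖(1 : Matrix n n R) i j‖ ≤ 1 := by
    rw [Matrix.one_apply]; split_ifs <;> simp
  simpa using IsUltrametricDist.norm_add_le_of_le ((hA i j).trans hδ) h1

lemma Matrix.norm_mul_apply_le [NormedRing R] [IsUltrametricDist R] {n : Type*} [Fintype n]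
    {A B : Matrix n n R} {r s : ℝ} (hA : ∀ i j, ‖A i j‖ ≤ r) (hB : ∀ i j, ‖B i j‖ ≤ s)
    (i j : n) : ‖(A * B) i j‖ ≤ r * s :=
  IsUltrametricDist.norm_sum_le_of_forall_le_of_nonneg
    (mul_nonneg ((norm_nonneg _).trans (hA i i)) ((norm_nonneg _).trans (hB j j)))
    fun k _ => (norm_mul_le _ _).trans
      (mul_le_mul (hA i k) (hB k j) (norm_nonneg _) ((norm_nonneg _).trans (hA i k)))

lemma Matrix.norm_mulVec_le [NormedRing R] [IsUltrametricDist R] {n : Type*} [Fintype n]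
    {T : Matrix n n R} {r : ℝ} (hr : 0 ≤ r) (hT : ∀ i j, ‖T i j‖ ≤ r) (v : n → R) :
    ‖T.mulVec v‖ ≤ r * ‖v‖ :=
  (pi_norm_le_iff_of_nonneg (by positivity)).mpr fun i =>
    IsUltrametricDist.norm_sum_le_of_forall_le_of_nonneg (by positivity) fun j _ =>
      (norm_mul_le _ _).trans (mul_le_mul (hT i j) (norm_le_pi_norm v j) (norm_nonneg _) hr)

lemma Matrix.SpecialLinearGroup.norm_inv_apply_le [NormedCommRing R] {g : SL(2, R)} {r : ℝ}
    (hg : ∀ i j, ‖(g : Matrix (Fin 2) (Fin 2) R) i j‖ ≤ r) (i j : Fin 2) :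
    ‖((g⁻¹ : SL(2, R)) : Matrix (Fin 2) (Fin 2) R) i j‖ ≤ r := by
  rw [Matrix.SpecialLinearGroup.coe_inv, Matrix.adjugate_fin_two]
  fin_cases i <;> fin_cases j <;> simp [hg]

lemma Matrix.SpecialLinearGroup.norm_conj_sub_one_apply_le [NormedCommRing R]
    [IsUltrametricDist R] {P g : SL(2, R)} {ρ ε : ℝ}
    (hP : ∀ i j, ‖(P : Matrix (Fin 2) (Fin 2) R) i j‖ ≤ ρ)
    (hg : ∀ i j, ‖((g : Matrix (Fin 2) (Fin 2) R) - 1) i j‖ ≤ ε) (i j : Fin 2) :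
    ‖(((P * g * P⁻¹ : SL(2, R)) : Matrix (Fin 2) (Fin 2) R) - 1) i j‖ ≤ ρ * ε * ρ := by
  have hPP : (P : Matrix (Fin 2) (Fin 2) R) * (P⁻¹ : SL(2, R)) = 1 := by
    rw [← Matrix.SpecialLinearGroup.coe_mul, mul_inv_cancel, Matrix.SpecialLinearGroup.coe_one]
  have hconj : ((P * g * P⁻¹ : SL(2, R)) : Matrix (Fin 2) (Fin 2) R) - 1 =
      P * ((g : Matrix (Fin 2) (Fin 2) R) - 1) * (P⁻¹ : SL(2, R)) := by
    rw [Matrix.SpecialLinearGroup.coe_mul, Matrix.SpecialLinearGroup.coe_mul, Matrix.mul_sub,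
      Matrix.sub_mul, Matrix.mul_one, hPP]
  rw [hconj]
  exact Matrix.norm_mul_apply_le (Matrix.norm_mul_apply_le hP hg) (norm_inv_apply_le hP) i j

end Ultrametric

section LowerDiagUpper

variable {K : Type*} [Field K]

lemma Matrix.mul_diag_mul_apply_div (B C : Matrix (Fin 2) (Fin 2) K) {d : K} (hd : d ≠ 0)
    (i j : Fin 2) :
    (B * !![d, 0; 0, d⁻¹] * C) i j / d = B i 0 * C 0 j + (d ^ 2)⁻¹ * (B i 1 * C 1 j) := by
  simp only [Matrix.mul_apply, Fin.sum_univ_two, Matrix.of_apply, Matrix.cons_val',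
    Matrix.cons_val_zero, Matrix.cons_val_one, Matrix.empty_val', Matrix.cons_val_fin_one]
  field_simp
  ring

lemma Matrix.eq_lower_mul_diag_mul_upper (G : Matrix (Fin 2) (Fin 2) K) (hG : G.det = 1)
    {d : K} (hd : d ≠ 0) (h00 : G 0 0 ≠ 0) :
    G = !![G 0 0 / d, 0; G 1 0 / d, (G 0 0 / d)⁻¹] * !![d, 0; 0, d⁻¹] *
      !![1, G 0 1 / G 0 0; 0, 1] := by
  rw [Matrix.det_fin_two] at hG
  ext i j
  fin_cases i <;> fin_cases j <;> simp [Matrix.mul_apply, Fin.sum_univ_two] <;> field_simp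
  linear_combination hG

end LowerDiagUpper

lemma Matrix.norm_mul_diag_mul_apply_div_le {𝕜 : Type*} [NormedField 𝕜] [IsUltrametricDist 𝕜]
    {B C : Matrix (Fin 2) (Fin 2) 𝕜} {d : 𝕜} {δ m : ℝ} (hd : d ≠ 0)
    (hB : ∀ i j, ‖(B - 1) i j‖ ≤ δ) (hC : ∀ i j, ‖(C - 1) i j‖ ≤ δ) (hδ : δ ≤ 1)
    (hm : ‖(d ^ 2)⁻¹‖ ≤ m) (hm1 : 1 ≤ m) :
    ‖(B * !![d, 0; 0, d⁻¹] * C) 0 0 / d - 1‖ ≤ m * δ ∧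
      ‖(B * !![d, 0; 0, d⁻¹] * C) 1 0 / d‖ ≤ m * δ ∧
      ‖(B * !![d, 0; 0, d⁻¹] * C) 0 1 / d‖ ≤ m * δ := by
  have hδm : δ ≤ m * δ := le_mul_of_one_le_left ((norm_nonneg _).trans (hB 0 0)) hm1
  have hB1 := Matrix.norm_apply_le_one_of_norm_sub_one_apply_le hB hδ
  have hC1 := Matrix.norm_apply_le_one_of_norm_sub_one_apply_le hC hδ
  have hB00 : ‖B 0 0 - 1‖ ≤ δ := by simpa using hB 0 0
  have hB01 : ‖B 0 1‖ ≤ δ := by simpa using hB 0 1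
  have hB10 : ‖B 1 0‖ ≤ δ := by simpa using hB 1 0
  have hC00 : ‖C 0 0 - 1‖ ≤ δ := by simpa using hC 0 0
  have hC01 : ‖C 0 1‖ ≤ δ := by simpa using hC 0 1
  have hC10 : ‖C 1 0‖ ≤ δ := by simpa using hC 1 0
  have small_mul {x y : 𝕜} (hx : ‖x‖ ≤ δ) (hy : ‖y‖ ≤ 1) : ‖x * y‖ ≤ δ :=
    (norm_mul_le x y).trans ((mul_le_of_le_one_right (norm_nonneg x) hy).trans hx)
  have mul_small {x y : 𝕜} (hx : ‖x‖ ≤ 1) (hy : ‖y‖ ≤ δ) : ‖x * y‖ ≤ δ :=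
    (norm_mul_le x y).trans ((mul_le_of_le_one_left (norm_nonneg y) hx).trans hy)
  have scaled {z : 𝕜} (hz : ‖z‖ ≤ δ) : ‖(d ^ 2)⁻¹ * z‖ ≤ m * δ := by
    rw [norm_mul]; gcongr
  simp only [Matrix.mul_diag_mul_apply_div B C hd]
  refine ⟨?_, ?_, ?_⟩
  · rw [show B 0 0 * C 0 0 + (d ^ 2)⁻¹ * (B 0 1 * C 1 0) - 1 =
        ((B 0 0 - 1) * C 0 0 + (C 0 0 - 1)) + (d ^ 2)⁻¹ * (B 0 1 * C 1 0) by ring]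
    exact IsUltrametricDist.norm_add_le_of_le
      (IsUltrametricDist.norm_add_le_of_le ((small_mul hB00 (hC1 0 0)).trans hδm)
        (hC00.trans hδm)) (scaled (small_mul hB01 (hC1 1 0)))
  · exact IsUltrametricDist.norm_add_le_of_le ((small_mul hB10 (hC1 0 0)).trans hδm)
      (scaled (mul_small (hB1 1 1) hC10))
  · exact IsUltrametricDist.norm_add_le_of_le ((mul_small (hB1 0 0) hC01).trans hδm)
      (scaled (small_mul hB01 (hC1 1 1)))

def Matrix.SpecialLinearGroup.lowerTri {R : Type*} [CommRing R] (k : Rˣ) (l : R) : SL(2, R) :=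
  ⟨!![(k : R), 0; l, ↑k⁻¹], by simp [Matrix.det_fin_two_of]⟩

lemma congNbhdR_mono {ε ε' : ℝ} (h : ε ≤ ε') : congNbhdR p ε ⊆ congNbhdR p ε' :=
  fun _ hg i j => (hg i j).trans h

lemma conj_mem_congNbhdR {P g : SL(2, ℚ_[p])} {ρ ε : ℝ}
    (hP : ∀ i j, ‖(P : Matrix (Fin 2) (Fin 2) ℚ_[p]) i j‖ ≤ ρ) (hg : g ∈ congNbhdR p ε) :
    P * g * P⁻¹ ∈ congNbhdR p (ρ * ε * ρ) :=
  Matrix.SpecialLinearGroup.norm_conj_sub_one_apply_le hP hg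

lemma norm_nMat_apply_le (x : ℚ_[p]) (i j : Fin 2) :
    ‖(nMat p x : Matrix (Fin 2) (Fin 2) ℚ_[p]) i j‖ ≤ max 1 ‖x‖ := by
  fin_cases i <;> fin_cases j <;> simp [nMat]

lemma inv_mul_mul_mem_congNbhdR {q g : SL(2, ℚ_[p])} {ε : ℝ} (hq : q ∈ lowerTriZp p)
    (hg : g ∈ congNbhdR p ε) : q⁻¹ * g * q ∈ congNbhdR p ε := by
  simpa only [inv_inv, one_mul, mul_one] using
    conj_mem_congNbhdR p (Matrix.SpecialLinearGroup.norm_inv_apply_le hq.2) hg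

lemma nMat_mul_mul_inv_mem_congNbhdR (x : ℚ_[p]) {g : SL(2, ℚ_[p])} {ε : ℝ}
    (hg : g ∈ congNbhdR p ε) : nMat p x * g * (nMat p x)⁻¹ ∈ congNbhdR p (max 1 ‖x‖ ^ 2 * ε) :=
  congNbhdR_mono p (le_of_eq (by ring)) (conj_mem_congNbhdR p (norm_nMat_apply_le p x) hg)

lemma nMat_mem {u : ℚ_[p]} {r : ℝ} (hu : ‖u‖ ≤ r) : nMat p u ∈ congNbhdR p r ∩ upperUnip p := by
  have hr : 0 ≤ r := (norm_nonneg u).trans hu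
  refine ⟨fun i j => ?_, rfl, rfl, rfl⟩
  fin_cases i <;> fin_cases j <;> simp [nMat, hu, hr]

lemma lowerTri_mem {k : ℚ_[p]ˣ} {l : ℚ_[p]} {r : ℝ} (hk : ‖(k : ℚ_[p]) - 1‖ ≤ r)
    (hl : ‖l‖ ≤ r) (hr : r < 1) :
    Matrix.SpecialLinearGroup.lowerTri k l ∈ congNbhdR p r ∩ lowerTriZp p := by
  have hk1 : ‖(k : ℚ_[p])‖ = 1 := norm_eq_one_of_norm_sub_one_lt_one (hk.trans_lt hr)
  have hki : ‖(k : ℚ_[p])⁻¹ - 1‖ ≤ r := by rwa [norm_inv_sub_one_eq hk1]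
  have hr0 : 0 ≤ r := (norm_nonneg l).trans hl
  refine ⟨fun i j => ?_, rfl, fun i j => ?_⟩ <;> fin_cases i <;> fin_cases j <;>
    simp [Matrix.SpecialLinearGroup.lowerTri, hk, hki, hl, hr0, hk1]
  exact hl.trans hr.le

lemma coe_aMat (t : ℤ) : (aMat p t : Matrix (Fin 2) (Fin 2) ℚ_[p]) =
    !![(p : ℚ_[p]) ^ (-t), 0; 0, ((p : ℚ_[p]) ^ (-t))⁻¹] := by
  rw [← zpow_neg, neg_neg]; rfl

theorem exists_lowerTriZp_aMat_upperUnip {t : ℤ} {δ : ℝ} {h₁ h₂ : SL(2, ℚ_[p])}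
    (hh₁ : h₁ ∈ congNbhdR p δ) (hh₂ : h₂ ∈ congNbhdR p δ)
    (hδ : max 1 ((p : ℝ) ^ (-(2 * t))) * δ < 1) :
    ∃ q' ∈ congNbhdR p (max 1 ((p : ℝ) ^ (-(2 * t))) * δ) ∩ lowerTriZp p,
      ∃ n' ∈ congNbhdR p (max 1 ((p : ℝ) ^ (-(2 * t))) * δ) ∩ upperUnip p,
        h₁ * aMat p t * h₂ = q' * aMat p t * n' := by
  set m := max 1 ((p : ℝ) ^ (-(2 * t)))
  set d : ℚ_[p] := (p : ℚ_[p]) ^ (-t)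
  have hd : d ≠ 0 := zpow_ne_zero _ (Nat.cast_ne_zero.mpr (Fact.out : p.Prime).ne_zero)
  have hdm : ‖(d ^ 2)⁻¹‖ ≤ m := by
    rw [norm_inv, norm_pow, Padic.norm_p_zpow, neg_neg, ← zpow_natCast, ← zpow_mul, ← zpow_neg,
      mul_comm, Nat.cast_ofNat]
    exact le_max_right _ _
  have hδ1 : δ ≤ 1 :=
    (le_mul_of_one_le_left ((norm_nonneg _).trans (hh₁ 0 0)) (le_max_left _ _)).trans hδ.le
  set G := (h₁ : Matrix (Fin 2) (Fin 2) ℚ_[p]) * !![d, 0; 0, d⁻¹] * h₂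
  have hGcoe : ((h₁ * aMat p t * h₂ : SL(2, ℚ_[p])) : Matrix (Fin 2) (Fin 2) ℚ_[p]) = G := by
    rw [Matrix.SpecialLinearGroup.coe_mul, Matrix.SpecialLinearGroup.coe_mul, coe_aMat]
  obtain ⟨h00, h10, h01⟩ :=
    Matrix.norm_mul_diag_mul_apply_div_le hd hh₁ hh₂ hδ1 hdm (le_max_left _ _)
  have hk : ‖G 0 0 / d‖ = 1 := norm_eq_one_of_norm_sub_one_lt_one (h00.trans_lt hδ)
  have hG00 : G 0 0 ≠ 0 := fun h => by simp [h] at hk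
  refine ⟨Matrix.SpecialLinearGroup.lowerTri (Units.mk0 (G 0 0 / d) (div_ne_zero hG00 hd))
    (G 1 0 / d), lowerTri_mem p h00 h10 hδ, nMat p (G 0 1 / G 0 0), nMat_mem p ?_,
    Subtype.ext ?_⟩
  · rwa [← div_div_div_cancel_right₀ hd, norm_div, hk, div_one]
  · rw [hGcoe, Matrix.SpecialLinearGroup.coe_mul, Matrix.SpecialLinearGroup.coe_mul, coe_aMat]
    exact Matrix.eq_lower_mul_diag_mul_upper G
      (hGcoe ▸ Matrix.SpecialLinearGroup.det_coe _) hd hG00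

lemma matOpNorm_le {T : Matrix (Fin 2) (Fin 2) ℚ_[p]} {r : ℝ} (hT : ∀ i j, ‖T i j‖ ≤ r) :
    matOpNorm p T ≤ r := by
  have hr : 0 ≤ r := (norm_nonneg _).trans (hT 0 0)
  refine Real.sSup_le ?_ hr
  rintro _ ⟨v, hv, rfl⟩
  simpa [hv] using Matrix.norm_mulVec_le hr hT v

lemma norm_apply_le_matOpNorm (T : Matrix (Fin 2) (Fin 2) ℚ_[p]) (i j : Fin 2) :
    ‖T i j‖ ≤ matOpNorm p T := by
  set r := max (max ‖T 0 0‖ ‖T 0 1‖) (max ‖T 1 0‖ ‖T 1 1‖)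
  have hT : ∀ i j, ‖T i j‖ ≤ r := by
    intro i j; fin_cases i <;> fin_cases j <;> simp [r]
  have hbdd : BddAbove {r : ℝ | ∃ v : Fin 2 → ℚ_[p], ‖v‖ = 1 ∧ r = ‖T.mulVec v‖} := by
    refine ⟨r, ?_⟩
    rintro _ ⟨v, hv, rfl⟩
    simpa [hv] using Matrix.norm_mulVec_le ((norm_nonneg _).trans (hT 0 0)) hT v
  refine le_csSup_of_le hbdd ⟨Pi.single j 1, by rw [Pi.norm_single, norm_one], rfl⟩ ?_
  simpa [Matrix.mulVec_single_one] using norm_le_pi_norm (T.col j) i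

lemma adNorm_eq (x : ℚ_[p]) : adNorm p x = max 1 ‖x‖ ^ 2 := by
  set M := max 1 ‖x‖
  have hconj (T : Matrix (Fin 2) (Fin 2) ℚ_[p]) (hT : matOpNorm p T = 1) :
      matOpNorm p (!![1, x; 0, 1] * T * !![1, -x; 0, 1]) ≤ M ^ 2 := by
    have hT1 (i j : Fin 2) : ‖T i j‖ ≤ 1 := hT ▸ norm_apply_le_matOpNorm p T i j
    have hn' (i j : Fin 2) : ‖!![(1 : ℚ_[p]), -x; 0, 1] i j‖ ≤ M := by
      have := norm_nMat_apply_le p (-x) i j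
      rwa [norm_neg] at this
    refine matOpNorm_le p fun i j => ?_
    exact (Matrix.norm_mul_apply_le (Matrix.norm_mul_apply_le (norm_nMat_apply_le p x) hT1)
      hn' i j).trans_eq (by ring)
  have hbdd : BddAbove {r : ℝ | ∃ T : Matrix (Fin 2) (Fin 2) ℚ_[p], matOpNorm p T = 1 ∧
      r = matOpNorm p (!![1, x; 0, 1] * T * !![1, -x; 0, 1])} :=
    ⟨M ^ 2, fun _ ⟨T, hT, h⟩ => h ▸ hconj T hT⟩
  -- the supremum is attained at the elementary matrix `E₁₀`
  set E : Matrix (Fin 2) (Fin 2) ℚ_[p] := !![0, 0; 1, 0]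
  have hE : matOpNorm p E = 1 :=
    le_antisymm (matOpNorm_le p fun i j => by fin_cases i <;> fin_cases j <;> simp [E])
      (by simpa [E] using norm_apply_le_matOpNorm p E 1 0)
  have hconjE : !![1, x; 0, 1] * E * !![1, -x; 0, 1] = !![x, -(x * x); 1, -x] := by
    simp [E]
  have h10 := norm_apply_le_matOpNorm p !![x, -(x * x); 1, -x] 1 0
  have h01 := norm_apply_le_matOpNorm p !![x, -(x * x); 1, -x] 0 1
  simp only [Matrix.of_apply, Matrix.cons_val', Matrix.cons_val_zero, Matrix.cons_val_one,
    Matrix.empty_val', Matrix.cons_val_fin_one, norm_one, norm_neg, norm_mul] at h10 h01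
  unfold adNorm
  refine le_antisymm (Real.sSup_le (fun _ ⟨T, hT, h⟩ => h ▸ hconj T hT) (by positivity))
    (le_csSup_of_le hbdd ⟨E, hE, congrArg _ hconjE.symm⟩ ?_)
  rcases max_choice 1 ‖x‖ with h | h <;> rw [show max 1 ‖x‖ = M from rfl] at h <;> rw [h]
  · simpa using h10
  · simpa [sq] using h01

lemma cConst_le_of_le {t₀ t : ℤ} {B : ℝ} {x : ℚ_[p]} (ht : t₀ ≤ t) (hx : ‖x‖ ≤ B) :
    cConst p t x ≤ max 1 ((p : ℝ) ^ (-(2 * t₀))) ^ 2 * max 1 B ^ 2 := by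
  rw [cConst, adNorm_eq]
  gcongr
  exact_mod_cast (Fact.out : p.Prime).one_lt.le

theorem effective_bruhat_iwasawa_decomposition
    (q : Matrix.SpecialLinearGroup (Fin 2) ℚ_[p]) (hq : q ∈ lowerTriZp p)
    (t : ℤ) (x : ℚ_[p]) (N : ℕ)
    (hsmall : cConst p t x * (p : ℝ) ^ (-(N : ℤ)) < 1) :
    (congNbhdR p ((p : ℝ) ^ (-(N : ℤ))) * {q * aMat p t * nMat p x} *
        congNbhdR p ((p : ℝ) ^ (-(N : ℤ))) ⊆
      {q} * (congNbhdR p (cConst p t x * (p : ℝ) ^ (-(N : ℤ))) ∩ lowerTriZp p) *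
        {aMat p t} *
        (congNbhdR p (cConst p t x * (p : ℝ) ^ (-(N : ℤ))) ∩ upperUnip p) * {nMat p x})
    ∧ (∀ (B : ℝ) (t₀ : ℤ), ∃ C : ℝ, ∀ (t' : ℤ) (x' : ℚ_[p]),
        t₀ ≤ t' → ‖x'‖ ≤ B → cConst p t' x' ≤ C) := by
  refine ⟨?_, fun B t₀ => ⟨_, fun t' x' ht hx => cConst_le_of_le p ht hx⟩⟩
  set ε := (p : ℝ) ^ (-(N : ℤ))
  set A := max 1 ‖x‖ ^ 2
  have hε : 0 ≤ ε := by positivity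
  have hA : 1 ≤ A := one_le_pow₀ (le_max_left _ _)
  have hradius : max 1 ((p : ℝ) ^ (-(2 * t))) * (A * ε) ≤ cConst p t x * ε := by
    rw [cConst, adNorm_eq, mul_assoc]
    exact mul_le_mul_of_nonneg_right (le_self_pow₀ (le_max_left _ _) two_ne_zero)
      (mul_nonneg (zero_le_one.trans hA) hε)
  rintro _ ⟨_, ⟨g₁, hg₁, _, rfl, rfl⟩, g₂, hg₂, rfl⟩
  obtain ⟨q', hq', n', hn', hdecomp⟩ := exists_lowerTriZp_aMat_upperUnip p
    (congNbhdR_mono p (le_mul_of_one_le_left hε hA) (inv_mul_mul_mem_congNbhdR p hq hg₁))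
    (nMat_mul_mul_inv_mem_congNbhdR p x hg₂) (hradius.trans_lt hsmall)
  have hg : g₁ * (q * aMat p t * nMat p x) * g₂ = q * q' * aMat p t * n' * nMat p x :=
    calc _ = q * (q⁻¹ * g₁ * q * aMat p t * (nMat p x * g₂ * (nMat p x)⁻¹)) * nMat p x := by
          group
      _ = _ := by rw [hdecomp]; group
  have hmono := congNbhdR_mono p hradius
  beta_reduce
  rw [hg]
  exact Set.mul_mem_mul (Set.mul_mem_mul (Set.mul_mem_mul (Set.mul_mem_mul rfl
    (Set.inter_subset_inter_left _ hmono hq')) rfl) (Set.inter_subset_inter_left _ hmono hn')) rfl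
end

section
/- Let p be a prime. Fix an integer k ≥ 1, θ ∈ ℤ_p^× × ℤ_p, Θ_p = θ + p^k ℤ_p², ψ ∈ ℤ, α ∈ ℚ_p, and t₀ ∈ ℤ. For integers t₁ ≤ t₂ define B_{t₁,t₂} = { q · diag(p^{−t}, p^{t}) · [[1, β],[0,1]] : q ∈ Q_p with first column in Θ_p, t ∈ ℤ with t₁ ≤ t ≤ t₂, β ∈ α + p^ψ ℤ_p } ⊆ SL₂(ℚ_p). Then there exists an integer N₀ such that for every N ≥ N₀ and all t₁, t₂ with t₀ ≤ t₁ ≤ t₂: O_{p^{−N}} · B_{t₁,t₂} · O_{p^{−N}} = B_{t₁,t₂}. In particular the family {B_{t₁,t₂}} is Lipschitz well-rounded with Lipschitz constant zero. -/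
/-!
Write `g ∈ B_{t₁,t₂}` as `q(u, m) · diag(p^{-t}, p^t) · n(β)`. Multiplying on the left by `w ≡ 1`
mod `p^N` moves the column `(u, m)` by at most `p^{-N}`, and the unipotent factor left over,
pushed through `diag(p^{-t}, p^t)`, moves `β` by at most `p^{-N} p^{-2t} ≤ p^{-N} p^{-2t₀}`.
Multiplying on the right by `v ≡ 1` rewrites `n(β) · v` as a lower triangular matrix near `1`
(which, pushed through the diagonal factor, moves `(u, m)`) times `n(β')` with `β'` near `β`;
the shifts are bounded by `p^{-N}` times a constant depending on `|α|, ψ` and `t₀` only.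
By the ultrametric inequality, the discs `θ + p^k ℤ_p²` and `α + p^ψ ℤ_p` and the unit group absorb
perturbations smaller than their radii, so for `N` large `B_{t₁,t₂}` is stable under both
multiplications; the reverse inclusion holds since `1 ∈ O_{p^{-N}}`.
-/

open Pointwise

variable (p : ℕ) [Fact p.Prime]

/-- The congruence neighborhood `O_{p^{−N}} = {g ∈ SL₂(ℚ_p) : g − I ∈ p^N Mat₂(ℤ_p)}`. -/
def congNbhd (N : ℕ) : Set (Matrix.SpecialLinearGroup (Fin 2) ℚ_[p]) :=
  {g | ∀ i j, ‖(g : Matrix (Fin 2) (Fin 2) ℚ_[p]) i j -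
      (1 : Matrix (Fin 2) (Fin 2) ℚ_[p]) i j‖ ≤ (p : ℝ) ^ (-(N : ℤ))}

/-- The set `B_{t₁,t₂} = Q_{Θ_p} · A_{t₁,t₂} · N_{α+p^ψ ℤ_p} ⊆ SL₂(ℚ_p)`:
products `q · diag(p^{−t}, p^{t}) · [[1,β],[0,1]]` where `q = [[u,0],[m,u⁻¹]] ∈ Q_p`
has first column `(u,m)` in the arc `θ + p^k ℤ_p²`, `t₁ ≤ t ≤ t₂`, and
`β ∈ α + p^ψ ℤ_p`. -/
def bruhatBox (θ : ℚ_[p] × ℚ_[p]) (k : ℕ) (α : ℚ_[p]) (ψ : ℤ) (t₁ t₂ : ℤ) :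
    Set (Matrix.SpecialLinearGroup (Fin 2) ℚ_[p]) :=
  {g | ∃ (u m β : ℚ_[p]) (t : ℤ),
    ‖u‖ = 1 ∧ ‖m‖ ≤ 1 ∧
    ‖u - θ.1‖ ≤ (p : ℝ) ^ (-(k : ℤ)) ∧ ‖m - θ.2‖ ≤ (p : ℝ) ^ (-(k : ℤ)) ∧
    t₁ ≤ t ∧ t ≤ t₂ ∧ ‖β - α‖ ≤ (p : ℝ) ^ (-ψ) ∧
    (g : Matrix (Fin 2) (Fin 2) ℚ_[p]) =
      !![u, 0; m, u⁻¹] * !![(p : ℚ_[p]) ^ (-t), 0; 0, (p : ℚ_[p]) ^ t] *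
        !![1, β; 0, 1]}

open Matrix

section Field

variable {K : Type*} [Field K]

def bruhatMatrix (u m P β : K) : Matrix (Fin 2) (Fin 2) K :=
  !![u, 0; m, u⁻¹] * !![P⁻¹, 0; 0, P] * !![1, β; 0, 1]

lemma bruhatMatrix_eq (u m P β : K) :
    bruhatMatrix u m P β = !![u * P⁻¹, u * P⁻¹ * β; m * P⁻¹, m * P⁻¹ * β + u⁻¹ * P] := by
  simp [bruhatMatrix]

/-- `w · q(u, m) = q(a, c) · n(w₀₁ / (a u))` for `(a, c) = w · (u, m)`, and pushing `n(x)` to the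
right through `diag(P⁻¹, P)` turns it into `n(x P²)`. -/
lemma mul_bruhatMatrix {w : Matrix (Fin 2) (Fin 2) K} (hw : w.det = 1) {u m P : K} (β : K)
    (hu : u ≠ 0) (hP : P ≠ 0) (ha : w 0 0 * u + w 0 1 * m ≠ 0) :
    w * bruhatMatrix u m P β =
      bruhatMatrix (w 0 0 * u + w 0 1 * m) (w 1 0 * u + w 1 1 * m) P
        (β + w 0 1 / ((w 0 0 * u + w 0 1 * m) * u) * P ^ 2) := by
  rw [det_fin_two] at hw
  have ha' : u * w 0 0 + m * w 0 1 ≠ 0 := by rwa [mul_comm u, mul_comm m]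
  rw [bruhatMatrix_eq, bruhatMatrix_eq, eta_fin_two w, mul_fin_two]
  ext i j
  fin_cases i <;> fin_cases j <;> simp <;> field_simp
  · ring
  · linear_combination u * P ^ 2 * hw

/-- `n(β) · v = q(s, v₁₀) · n(β')` with `s = v₀₀ + β v₁₀`, and pushing `q(s, v₁₀)` to the left
through `diag(P⁻¹, P)` turns it into `q(s, v₁₀ P²)`. -/
lemma bruhatMatrix_mul {v : Matrix (Fin 2) (Fin 2) K} (hv : v.det = 1) {u m P : K} (β : K)
    (hu : u ≠ 0) (hP : P ≠ 0) (hs : v 0 0 + β * v 1 0 ≠ 0) :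
    bruhatMatrix u m P β * v =
      bruhatMatrix (u * (v 0 0 + β * v 1 0)) (m * (v 0 0 + β * v 1 0) + v 1 0 * P ^ 2 / u) P
        ((v 0 1 + β * v 1 1) / (v 0 0 + β * v 1 0)) := by
  rw [det_fin_two] at hv
  rw [bruhatMatrix_eq, bruhatMatrix_eq, eta_fin_two v, mul_fin_two]
  ext i j
  fin_cases i <;> fin_cases j <;> simp <;> field_simp
  · ring
  · linear_combination P ^ 2 * hv

end Field

section Ultrametric

variable {K : Type*} [NormedField K] [IsUltrametricDist K]

lemma IsUltrametricDist.norm_add_le_of_le_s17 {x y : K} {r : ℝ} (hx : ‖x‖ ≤ r) (hy : ‖y‖ ≤ r) :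
    ‖x + y‖ ≤ r :=
  (norm_add_le_max x y).trans (max_le hx hy)

lemma IsUltrametricDist.norm_sub_le_of_le {x y z : K} {r : ℝ} (hxy : ‖x - y‖ ≤ r)
    (hyz : ‖y - z‖ ≤ r) : ‖x - z‖ ≤ r :=
  sub_add_sub_cancel x y z ▸ norm_add_le_of_le_s17 hxy hyz

lemma IsUltrametricDist.norm_eq_of_norm_sub_lt {x y : K} (h : ‖x - y‖ < ‖y‖) : ‖x‖ = ‖y‖ := by
  simpa [max_eq_right h.le] using IsUltrametricDist.norm_add_eq_max_of_norm_ne_norm h.ne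

lemma norm_mulVec_sub_self_le {n : Type*} [Fintype n] [DecidableEq n] {w : Matrix n n K}
    {ε C : ℝ} (hw : ∀ i j, ‖w i j - (1 : Matrix n n K) i j‖ ≤ ε) {x : n → K}
    (hx : ∀ j, ‖x j‖ ≤ C) (i : n) : ‖(w *ᵥ x) i - x i‖ ≤ ε * C := by
  have hε : 0 ≤ ε := (norm_nonneg _).trans (hw i i)
  have hC : 0 ≤ C := (norm_nonneg _).trans (hx i)
  have hsum : (w *ᵥ x) i - x i = ∑ j, (w i j - (1 : Matrix n n K) i j) * x j := by
    change _ = ((w - 1) *ᵥ x) i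
    rw [sub_mulVec, one_mulVec, Pi.sub_apply]
  rw [hsum]
  refine IsUltrametricDist.norm_sum_le_of_forall_le_of_nonneg (by positivity) fun j _ => ?_
  rw [norm_mul]
  exact mul_le_mul (hw i j) (hx j) (norm_nonneg _) hε

lemma norm_vecMul_sub_self_le {n : Type*} [Fintype n] [DecidableEq n] {w : Matrix n n K}
    {ε C : ℝ} (hw : ∀ i j, ‖w i j - (1 : Matrix n n K) i j‖ ≤ ε) {x : n → K}
    (hx : ∀ j, ‖x j‖ ≤ C) (j : n) : ‖(x ᵥ* w) j - x j‖ ≤ ε * C := by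
  rw [← mulVec_transpose]
  refine norm_mulVec_sub_self_le (fun i j => ?_) hx j
  simpa [one_apply, eq_comm] using hw j i

end Ultrametric

variable {p}

def IsBruhatBoxParam (θ : ℚ_[p] × ℚ_[p]) (k : ℕ) (α : ℚ_[p]) (ψ t₁ t₂ : ℤ) (u m β : ℚ_[p])
    (t : ℤ) : Prop :=
  ‖u‖ = 1 ∧ ‖m‖ ≤ 1 ∧
    ‖u - θ.1‖ ≤ (p : ℝ) ^ (-(k : ℤ)) ∧ ‖m - θ.2‖ ≤ (p : ℝ) ^ (-(k : ℤ)) ∧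
    t₁ ≤ t ∧ t ≤ t₂ ∧ ‖β - α‖ ≤ (p : ℝ) ^ (-ψ)

section BruhatBox

variable {θ : ℚ_[p] × ℚ_[p]} {k : ℕ} {α : ℚ_[p]} {ψ t₁ t₂ : ℤ}

lemma mem_bruhatBox_iff {g : SpecialLinearGroup (Fin 2) ℚ_[p]} :
    g ∈ bruhatBox p θ k α ψ t₁ t₂ ↔
      ∃ u m β t, IsBruhatBoxParam θ k α ψ t₁ t₂ u m β t ∧ (g : Matrix (Fin 2) (Fin 2) ℚ_[p]) =
        bruhatMatrix u m ((p : ℚ_[p]) ^ t) β := by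
  simp only [bruhatBox, IsBruhatBoxParam, bruhatMatrix, ← _root_.zpow_neg, Set.mem_ofPred_eq,
    and_assoc]

lemma IsBruhatBoxParam.of_norm_sub_le {u m β u' m' β' : ℚ_[p]} {t : ℤ}
    (h : IsBruhatBoxParam θ k α ψ t₁ t₂ u m β t) {δ : ℝ} (hδ : δ < 1)
    (hδk : δ ≤ (p : ℝ) ^ (-(k : ℤ))) (hδψ : δ ≤ (p : ℝ) ^ (-ψ))
    (hu : ‖u' - u‖ ≤ δ) (hm : ‖m' - m‖ ≤ δ) (hβ : ‖β' - β‖ ≤ δ) :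
    IsBruhatBoxParam θ k α ψ t₁ t₂ u' m' β' t := by
  obtain ⟨hu1, hm1, huθ, hmθ, ht₁, ht₂, hβα⟩ := h
  have hk1 : (p : ℝ) ^ (-(k : ℤ)) ≤ 1 :=
    zpow_le_one_of_nonpos₀ (by exact_mod_cast (Fact.out : p.Prime).one_le) (by omega)
  refine ⟨?_, ?_, ?_, ?_, ht₁, ht₂, ?_⟩
  · rw [← hu1]; exact IsUltrametricDist.norm_eq_of_norm_sub_lt (by rw [hu1]; linarith)
  · simpa using IsUltrametricDist.norm_sub_le_of_le (z := 0) (hm.trans (hδk.trans hk1))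
      (by simpa using hm1)
  · exact IsUltrametricDist.norm_sub_le_of_le (hu.trans hδk) huθ
  · exact IsUltrametricDist.norm_sub_le_of_le (hm.trans hδk) hmθ
  · exact IsUltrametricDist.norm_sub_le_of_le (hβ.trans hδψ) hβα

lemma Padic.norm_p_zpow_le {t₀ t : ℤ} (ht : t₀ ≤ t) : ‖(p : ℚ_[p]) ^ t‖ ≤ (p : ℝ) ^ (-t₀) := by
  rw [Padic.norm_p_zpow]
  exact zpow_le_zpow_right₀ (by exact_mod_cast (Fact.out : p.Prime).one_le) (by omega)

lemma mul_mem_bruhatBox_left {w g : SpecialLinearGroup (Fin 2) ℚ_[p]} {ε δ : ℝ} {t₀ : ℤ}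
    (hw : ∀ i j, ‖(w : Matrix (Fin 2) (Fin 2) ℚ_[p]) i j -
      (1 : Matrix (Fin 2) (Fin 2) ℚ_[p]) i j‖ ≤ ε)
    (hδ : δ < 1) (hδk : δ ≤ (p : ℝ) ^ (-(k : ℤ))) (hδψ : δ ≤ (p : ℝ) ^ (-ψ))
    (hε : ε ≤ δ) (hεt : ε * ((p : ℝ) ^ (-t₀)) ^ 2 ≤ δ) (ht₀ : t₀ ≤ t₁)
    (hg : g ∈ bruhatBox p θ k α ψ t₁ t₂) : w * g ∈ bruhatBox p θ k α ψ t₁ t₂ := by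
  obtain ⟨u, m, β, t, hpar, hg⟩ := mem_bruhatBox_iff.1 hg
  have ⟨hu, hm, _, _, ht, _⟩ := hpar
  have hx : ∀ j, ‖![u, m] j‖ ≤ 1 := by
    intro j; fin_cases j <;> simp [hu, hm]
  have ha : ‖(w 0 0 * u + w 0 1 * m) - u‖ ≤ ε := by
    simpa [mulVec, dotProduct, Fin.sum_univ_two] using norm_mulVec_sub_self_le hw hx 0
  have hc : ‖(w 1 0 * u + w 1 1 * m) - m‖ ≤ ε := by
    simpa [mulVec, dotProduct, Fin.sum_univ_two] using norm_mulVec_sub_self_le hw hx 1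
  have ha1 : ‖w 0 0 * u + w 0 1 * m‖ = 1 :=
    hu ▸ IsUltrametricDist.norm_eq_of_norm_sub_lt (by linarith)
  have hε0 : 0 ≤ ε := (norm_nonneg _).trans (hw 0 0)
  have hb : ‖(β + w 0 1 / ((w 0 0 * u + w 0 1 * m) * u) * ((p : ℚ_[p]) ^ t) ^ 2) - β‖ ≤ δ := by
    rw [add_sub_cancel_left, norm_mul, norm_div, norm_mul, ha1, hu, norm_pow]
    refine le_trans ?_ hεt
    have h01 : ‖(w : Matrix (Fin 2) (Fin 2) ℚ_[p]) 0 1‖ ≤ ε := by simpa using hw 0 1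
    simp only [mul_one, div_one]
    gcongr
    exact Padic.norm_p_zpow_le (ht₀.trans ht)
  rw [mem_bruhatBox_iff]
  refine ⟨_, _, _, t,
    hpar.of_norm_sub_le hδ hδk hδψ (ha.trans hε) (hc.trans hε) hb, ?_⟩
  rw [← mul_bruhatMatrix w.det_coe β (ne_zero_of_norm_ne_zero (by simp [hu]))
    (zpow_ne_zero _ (by exact_mod_cast (Fact.out : p.Prime).ne_zero))
    (ne_zero_of_norm_ne_zero (by simp [ha1])), ← hg]
  rfl

lemma mul_mem_bruhatBox_right {g v : SpecialLinearGroup (Fin 2) ℚ_[p]} {ε δ C : ℝ} {t₀ : ℤ}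
    (hv : ∀ i j, ‖(v : Matrix (Fin 2) (Fin 2) ℚ_[p]) i j -
      (1 : Matrix (Fin 2) (Fin 2) ℚ_[p]) i j‖ ≤ ε)
    (hδ : δ < 1) (hδk : δ ≤ (p : ℝ) ^ (-(k : ℤ))) (hδψ : δ ≤ (p : ℝ) ^ (-ψ))
    (hC : 1 ≤ C) (hαC : ‖α‖ ≤ C) (hψC : (p : ℝ) ^ (-ψ) ≤ C)
    (hεC : ε * C ^ 2 ≤ δ) (hεt : ε * ((p : ℝ) ^ (-t₀)) ^ 2 ≤ δ) (ht₀ : t₀ ≤ t₁)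
    (hg : g ∈ bruhatBox p θ k α ψ t₁ t₂) : g * v ∈ bruhatBox p θ k α ψ t₁ t₂ := by
  obtain ⟨u, m, β, t, hpar, hg⟩ := mem_bruhatBox_iff.1 hg
  have ⟨hu, hm, _, _, ht, _, hβα⟩ := hpar
  have hε0 : 0 ≤ ε := (norm_nonneg _).trans (hv 0 0)
  have hεC' : ε * C ≤ δ := le_trans (by gcongr; exact le_self_pow₀ hC two_ne_zero) hεC
  have hβ : ‖β‖ ≤ C := by
    simpa using IsUltrametricDist.norm_sub_le_of_le (z := 0) (hβα.trans hψC) (by simpa using hαC)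
  have hx : ∀ j, ‖![1, β] j‖ ≤ C := by
    intro j; fin_cases j <;> simp [hC, hβ]
  set s := v 0 0 + β * v 1 0
  have hs : ‖s - 1‖ ≤ ε * C := by
    simpa [vecMul, dotProduct, Fin.sum_univ_two] using norm_vecMul_sub_self_le hv hx 0
  have hy : ‖(v 0 1 + β * v 1 1) - β‖ ≤ ε * C := by
    simpa [vecMul, dotProduct, Fin.sum_univ_two] using norm_vecMul_sub_self_le hv hx 1
  have hs1 : ‖s‖ = 1 := by
    simpa using IsUltrametricDist.norm_eq_of_norm_sub_lt (y := (1 : ℚ_[p])) (by simp; linarith)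
  have hs0 : s ≠ 0 := ne_zero_of_norm_ne_zero (by simp [hs1])
  have hu' : ‖u * s - u‖ ≤ δ := by
    rw [← mul_sub_one, norm_mul, hu, one_mul]; linarith
  have hm' : ‖(m * s + v 1 0 * ((p : ℚ_[p]) ^ t) ^ 2 / u) - m‖ ≤ δ := by
    rw [add_sub_right_comm, ← mul_sub_one]
    refine IsUltrametricDist.norm_add_le_of_le_s17 ?_ ?_
    · rw [norm_mul]
      exact (mul_le_of_le_one_left (norm_nonneg _) hm).trans (hs.trans hεC')
    · have h10 : ‖(v : Matrix (Fin 2) (Fin 2) ℚ_[p]) 1 0‖ ≤ ε := by simpa using hv 1 0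
      rw [norm_div, norm_mul, hu, div_one, norm_pow]
      refine le_trans ?_ hεt
      gcongr
      exact Padic.norm_p_zpow_le (ht₀.trans ht)
  have hβ' : ‖(v 0 1 + β * v 1 1) / s - β‖ ≤ δ := by
    rw [show (v 0 1 + β * v 1 1) / s - β = ((v 0 1 + β * v 1 1 - β) - β * (s - 1)) / s by
      field_simp; ring, norm_div, hs1, div_one, sub_eq_add_neg _ (β * _)]
    refine IsUltrametricDist.norm_add_le_of_le_s17 (hy.trans hεC') ?_
    calc ‖-(β * (s - 1))‖ = ‖β‖ * ‖s - 1‖ := by rw [norm_neg, norm_mul]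
      _ ≤ C * (ε * C) := mul_le_mul hβ hs (norm_nonneg _) (by linarith)
      _ = ε * C ^ 2 := by ring
      _ ≤ δ := hεC
  rw [mem_bruhatBox_iff]
  refine ⟨_, _, _, t, hpar.of_norm_sub_le hδ hδk hδψ hu' hm' hβ', ?_⟩
  rw [← bruhatMatrix_mul v.det_coe β (ne_zero_of_norm_ne_zero (by simp [hu]))
    (zpow_ne_zero _ (by exact_mod_cast (Fact.out : p.Prime).ne_zero)) hs0, ← hg]
  rfl

end BruhatBox

variable (p)

lemma one_mem_congNbhd (N : ℕ) : 1 ∈ congNbhd p N := by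
  intro i j
  change ‖(1 : Matrix (Fin 2) (Fin 2) ℚ_[p]) i j - (1 : Matrix (Fin 2) (Fin 2) ℚ_[p]) i j‖ ≤ _
  rw [sub_self, norm_zero]
  positivity

lemma eventually_zpow_neg_mul_le {q : ℝ} (hq : 1 < q) (D : ℝ) {δ : ℝ} (hδ : 0 < δ) :
    ∀ᶠ N : ℕ in Filter.atTop, q ^ (-(N : ℤ)) * D ≤ δ := by
  have h : Filter.Tendsto (fun N : ℕ => q ^ (-(N : ℤ)) * D) Filter.atTop (nhds 0) := by
    simpa [_root_.zpow_neg, ← inv_pow] using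
      (tendsto_pow_atTop_nhds_zero_of_lt_one (by positivity) (inv_lt_one_of_one_lt₀ hq)).mul_const D
  exact (h.eventually_lt_const hδ).mono fun _ => le_of_lt

theorem bruhatBox_well_rounded
    (k : ℕ) (θ : ℚ_[p] × ℚ_[p])
    (α : ℚ_[p]) (ψ : ℤ) (t₀ : ℤ) :
    ∃ N₀ : ℕ, ∀ N : ℕ, N₀ ≤ N → ∀ t₁ t₂ : ℤ, t₀ ≤ t₁ → t₁ ≤ t₂ →
      congNbhd p N * bruhatBox p θ k α ψ t₁ t₂ * congNbhd p N =
        bruhatBox p θ k α ψ t₁ t₂ := by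
  have hp : (1 : ℝ) < p := by exact_mod_cast (Fact.out : p.Prime).one_lt
  set C : ℝ := max 1 (max ‖α‖ ((p : ℝ) ^ (-ψ)))
  set R : ℝ := (p : ℝ) ^ (-t₀)
  set δ : ℝ := min 2⁻¹ (min ((p : ℝ) ^ (-(k : ℤ))) ((p : ℝ) ^ (-ψ)))
  have hδ1 : δ < 1 := (min_le_left _ _).trans_lt (by norm_num)
  have hδk : δ ≤ (p : ℝ) ^ (-(k : ℤ)) := (min_le_right _ _).trans (min_le_left _ _)
  have hδψ : δ ≤ (p : ℝ) ^ (-ψ) := (min_le_right _ _).trans (min_le_right _ _)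
  have hC : 1 ≤ C := le_max_left _ _
  obtain ⟨N₀, hN₀⟩ := Filter.eventually_atTop.1 <|
    eventually_zpow_neg_mul_le hp (max (C ^ 2) (R ^ 2)) (δ := δ)
      (lt_min (by norm_num) (lt_min (zpow_pos (by linarith) _) (zpow_pos (by linarith) _)))
  refine ⟨N₀, fun N hN t₁ t₂ ht₀ _ => subset_antisymm ?_ fun g hg => ?_⟩
  · set ε : ℝ := (p : ℝ) ^ (-(N : ℤ))
    have hεC : ε * C ^ 2 ≤ δ := le_trans (by gcongr; exact le_max_left _ _) (hN₀ N hN)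
    have hεR : ε * R ^ 2 ≤ δ := le_trans (by gcongr; exact le_max_right _ _) (hN₀ N hN)
    have hε : ε ≤ δ := (le_mul_of_one_le_right (by positivity) (one_le_pow₀ hC)).trans hεC
    rintro _ ⟨_, ⟨w, hw, g, hg, rfl⟩, v, hv, rfl⟩
    exact mul_mem_bruhatBox_right hv hδ1 hδk hδψ hC ((le_max_left _ _).trans (le_max_right _ _))
      ((le_max_right _ _).trans (le_max_right _ _)) hεC hεR ht₀
      (mul_mem_bruhatBox_left hw hδ1 hδk hδψ hε hεR ht₀ hg)
  · simpa using Set.mul_mem_mul (Set.mul_mem_mul (one_mem_congNbhd p N) hg) (one_mem_congNbhd p N)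
end

section
/- Let p be a prime and let μ be a Haar measure on the locally compact group SL₂(ℚ_p). Then the complement of the big Bruhat cell, i.e. the set {g ∈ SL₂(ℚ_p) : g₁₁ = 0} of matrices whose top-left entry vanishes, has μ-measure zero. -/
/-! Left multiplication by `!![1, -t; 0, 1]` pulls the set `{g | g₀₀ = 0}` back to
`{g | g₀₀ = t g₁₀}`, so by left invariance all of these sets, `t ∈ ℚ_p`, have the same Haar
measure. They are pairwise disjoint, because the first column of `g ∈ SL₂` never vanishes.
A σ-finite measure gives positive mass to at most countably many disjoint measurable sets,
while `ℚ_p` is uncountable, so the common measure is `0`. -/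

open MeasureTheory

noncomputable instance (p : ℕ) [Fact p.Prime] : MeasurableSpace ℚ_[p] := borel _
instance (p : ℕ) [Fact p.Prime] : BorelSpace ℚ_[p] := ⟨rfl⟩

noncomputable instance (p : ℕ) [Fact p.Prime] :
    MeasurableSpace (Matrix (Fin 2) (Fin 2) ℚ_[p]) :=
  inferInstanceAs (MeasurableSpace (Fin 2 → Fin 2 → ℚ_[p]))

noncomputable instance (p : ℕ) [Fact p.Prime] :
    MeasurableSpace (Matrix.SpecialLinearGroup (Fin 2) ℚ_[p]) :=
  inferInstanceAs (MeasurableSpace {A : Matrix (Fin 2) (Fin 2) ℚ_[p] // A.det = 1})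

instance (p : ℕ) [Fact p.Prime] :
    TopologicalSpace (Matrix.SpecialLinearGroup (Fin 2) ℚ_[p]) :=
  inferInstanceAs (TopologicalSpace {A : Matrix (Fin 2) (Fin 2) ℚ_[p] // A.det = 1})

open Function

theorem uncountable_of_nontriviallyNormedField (𝕜 : Type*) [NontriviallyNormedField 𝕜]
    [CompleteSpace 𝕜] : Uncountable 𝕜 :=
  Cardinal.aleph0_lt_mk_iff.mp <|
    Cardinal.aleph0_lt_continuum.trans_le (continuum_le_cardinal_of_nontriviallyNormedField 𝕜)

theorem MeasureTheory.Measure.eq_zero_of_pairwise_disjoint_of_measure_eq {α ι : Type*}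
    [MeasurableSpace α] {μ : Measure α} [SFinite μ] [Uncountable ι] {s : ι → Set α}
    (hs : ∀ i, MeasurableSet (s i)) (hd : Pairwise (Disjoint on s)) {c : ENNReal}
    (hc : ∀ i, μ (s i) = c) : c = 0 := by
  by_contra hc0
  refine Set.not_countable_univ (Set.Countable.mono (fun i _ => ?_)
    (Measure.countable_meas_pos_of_disjoint_iUnion (μ := μ) hs hd))
  simpa [hc] using pos_iff_ne_zero.mpr hc0

namespace Matrix.SpecialLinearGroup

variable {R : Type*} [CommRing R]

def upperUnipotent (t : R) : SpecialLinearGroup (Fin 2) R :=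
  ⟨!![1, t; 0, 1], by simp [Matrix.det_fin_two_of]⟩

theorem upperUnipotent_mul_apply_zero_zero (t : R) (g : SpecialLinearGroup (Fin 2) R) :
    (upperUnipotent t * g) 0 0 = g 0 0 + t * g 1 0 := by
  rw [coe_mul]
  simp [upperUnipotent, Matrix.mul_apply, Fin.sum_univ_two]

theorem preimage_upperUnipotent_mul_setOf_apply_zero_zero_eq_zero (t : R) :
    (upperUnipotent (-t) * ·) ⁻¹' {g : SpecialLinearGroup (Fin 2) R | g 0 0 = 0} =
      {g | g 0 0 = t * g 1 0} := by
  ext g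
  simp [upperUnipotent_mul_apply_zero_zero, neg_mul, add_neg_eq_zero]

theorem pairwise_disjoint_setOf_apply_zero_zero_eq_mul [IsDomain R] :
    Pairwise (Disjoint on fun t : R =>
      {g : SpecialLinearGroup (Fin 2) R | g 0 0 = t * g 1 0}) := by
  intro s t hst
  refine Set.disjoint_left.mpr fun g (hs : g 0 0 = _) (ht : g 0 0 = _) => ?_
  have h10 : g 1 0 = 0 :=
    (mul_eq_zero.mp (by linear_combination ht - hs : (s - t) * g 1 0 = 0)).resolve_left
      (sub_ne_zero.mpr hst)
  have hdet := g.det_coe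
  rw [Matrix.det_fin_two, hs, h10] at hdet
  simp at hdet

end Matrix.SpecialLinearGroup

section

variable (p : ℕ) [Fact p.Prime]

-- Instance search does not see through the topology declared above to Mathlib's own on `SL`.
instance : IsTopologicalGroup (Matrix.SpecialLinearGroup (Fin 2) ℚ_[p]) :=
  Matrix.SpecialLinearGroup.topologicalGroup

instance : BorelSpace (Matrix.SpecialLinearGroup (Fin 2) ℚ_[p]) :=
  have : BorelSpace (Matrix (Fin 2) (Fin 2) ℚ_[p]) :=
    inferInstanceAs (BorelSpace (Fin 2 → Fin 2 → ℚ_[p]))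
  Subtype.borelSpace _

instance : SigmaCompactSpace (Matrix.SpecialLinearGroup (Fin 2) ℚ_[p]) :=
  have : SigmaCompactSpace (Matrix (Fin 2) (Fin 2) ℚ_[p]) :=
    inferInstanceAs (SigmaCompactSpace (Fin 2 → Fin 2 → ℚ_[p]))
  Matrix.SpecialLinearGroup.isClosedEmbedding_val.sigmaCompactSpace

theorem measurableSet_setOf_apply_zero_zero_eq_mul (t : ℚ_[p]) :
    MeasurableSet {g : Matrix.SpecialLinearGroup (Fin 2) ℚ_[p] | g 0 0 = t * g 1 0} := by
  have h : ∀ i j, Measurable fun g : Matrix.SpecialLinearGroup (Fin 2) ℚ_[p] => g i j :=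
    fun i j => (measurable_pi_apply j).comp ((measurable_pi_apply i).comp measurable_subtype_coe)
  exact measurableSet_eq_fun (h 0 0) ((h 1 0).const_mul t)

end

open Matrix.SpecialLinearGroup

/-- **The complement of the big Bruhat cell is Haar-null:** for any Haar measure `μ` on
`SL₂(ℚ_p)`, the set of matrices whose top-left entry vanishes has measure zero. -/
theorem complement_big_bruhat_cell_null
    (p : ℕ) [Fact p.Prime]
    (μ : Measure (Matrix.SpecialLinearGroup (Fin 2) ℚ_[p]))
    [μ.IsHaarMeasure] :
    μ {g : Matrix.SpecialLinearGroup (Fin 2) ℚ_[p] |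
        (g : Matrix (Fin 2) (Fin 2) ℚ_[p]) 0 0 = 0} = 0 := by
  have := uncountable_of_nontriviallyNormedField ℚ_[p]
  refine Measure.eq_zero_of_pairwise_disjoint_of_measure_eq (μ := μ)
    (measurableSet_setOf_apply_zero_zero_eq_mul p) pairwise_disjoint_setOf_apply_zero_zero_eq_mul
    fun t => ?_
  rw [← preimage_upperUnipotent_mul_setOf_apply_zero_zero_eq_zero]
  exact measure_preimage_mul μ _ _
end
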